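/- arXiv:1803.03518 — 8 statements merged into one kernel-verified Lean document; each statement's English description precedes it below -/
import Mathlib

section
/- Let q be a power of a prime p, let n ≥ 2 be an integer, and let s be a positive integer with s < n - 1. Then there exist monic q-polynomials g(x) and g_s(x) in F_{q^n}[x] such that g_s(g(x)) = T_n(x), deg(g_s(x)) = q^s, and g_s(x) splits into linear factors over F_{q^n}. -/
/-
The roots of a q-polynomial form an F_q-subspace. If a monic q-polynomial G of degree q^i has q^i
distinct roots V and G(w) ≠ 0, then G^q - G(w)^(q-1) G vanishes on the q^(i+1) points of
V + F_q w, so it is again monic of degree q^(i+1) with distinct roots. The trace x ↦ T_n(x) is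
additive with values in F_q and has at most q^(n-1) zeros, so its kernel K has exactly q^(n-1)
elements. Starting from X and always choosing w ∈ K, after n - 1 steps one reaches a monic
polynomial of degree q^(n-1) vanishing on K, which must be T_n. Each step G ↦ G^q - c G commutes
with composition on the right, so cutting the sequence of steps after n - 1 - s of them writes
T_n = g_s ∘ g with deg g_s = q^s; and g_s splits because T_n does and g is surjective over an
algebraic closure.
-/

open Polynomial

/-- A `q`-polynomial (linearized polynomial): every monomial exponent is a power of `q`. -/
def IsqPoly (q : ℕ) {F : Type*} [Semiring F] (f : Polynomial F) : Prop :=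
  ∀ i ∈ f.support, ∃ k : ℕ, i = q ^ k

open Finset

theorem Polynomial.Splits.of_comp {K : Type*} [Field K] {f g : K[X]} (h : (f.comp g).Splits)
    (hg : 0 < g.natDegree) : f.Splits := by
  rcases eq_or_ne f 0 with rfl | hf
  · exact Splits.zero
  have hfg : f.comp g ≠ 0 := by
    rw [Ne, comp_eq_zero_iff, not_or]
    exact ⟨hf, fun ⟨_, hC⟩ => by rw [hC, natDegree_C] at hg; exact hg.false⟩
  let i := algebraMap K (AlgebraicClosure K)
  refine Splits.of_splits_map i (IsAlgClosed.splits _) fun a ha => ?_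
  obtain ⟨x, hx⟩ := IsAlgClosed.exists_root (g.map i - C a) (by
    rw [degree_sub_C (by rw [degree_map]; exact natDegree_pos_iff_degree_pos.mp hg), degree_map]
    exact (natDegree_pos_iff_degree_pos.mp hg).ne')
  have hgx : (g.map i).eval x = a := by simpa [sub_eq_zero] using hx
  obtain ⟨y, rfl⟩ := h.mem_range_of_isRoot hfg (i := i) (x := x) (by
    rw [IsRoot, map_comp, eval_comp, hgx]; exact (mem_roots'.mp ha).2)
  exact ⟨g.eval y, by rw [← hgx, eval_map, eval₂_at_apply]⟩

theorem AddMonoidHom.card_le_card_ker_mul {G H : Type*} [AddGroup G] [Fintype G] [AddMonoid H]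
    [DecidableEq H] (φ : G →+ H) {t : Finset H} (ht : ∀ x, φ x ∈ t) :
    Fintype.card G ≤ #{x | φ x = 0} * #t := by
  refine card_le_mul_card_image_of_maps_to (fun x _ => ht x) _ fun b _ => ?_
  by_cases hb : b ∈ Set.range φ
  · exact (AddMonoidHom.card_fiber_eq_of_mem_range φ hb ⟨0, map_zero φ⟩).le
  · rw [card_eq_zero.mpr (filter_eq_empty_iff.mpr fun x _ hx => hb ⟨x, hx⟩)]
    exact Nat.zero_le _

section IsqPoly

variable {R : Type*} {q : ℕ}

theorem IsqPoly.zero [Semiring R] : IsqPoly q (0 : R[X]) := by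
  simp [IsqPoly]

theorem isqPoly_X_pow_pow [Semiring R] (k : ℕ) : IsqPoly q (X ^ q ^ k : R[X]) := by
  intro i hi
  rw [X_pow_eq_monomial] at hi
  exact ⟨k, mem_singleton.mp (support_monomial_subset _ _ hi)⟩

theorem isqPoly_X [Semiring R] : IsqPoly q (X : R[X]) := by
  simpa using isqPoly_X_pow_pow (R := R) (q := q) 0

theorem IsqPoly.add [Semiring R] {f g : R[X]} (hf : IsqPoly q f) (hg : IsqPoly q g) :
    IsqPoly q (f + g) := fun i hi =>
  (mem_union.mp (support_add hi)).elim (hf i) (hg i)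

theorem IsqPoly.neg [Ring R] {f : R[X]} (hf : IsqPoly q f) : IsqPoly q (-f) := by
  rwa [IsqPoly, support_neg]

theorem IsqPoly.sub [Ring R] {f g : R[X]} (hf : IsqPoly q f) (hg : IsqPoly q g) :
    IsqPoly q (f - g) := by
  rw [sub_eq_add_neg]; exact hf.add hg.neg

theorem IsqPoly.C_mul [Semiring R] {f : R[X]} (hf : IsqPoly q f) (c : R) :
    IsqPoly q (C c * f) := fun i hi =>
  hf i (by rw [← smul_eq_C_mul] at hi; exact support_smul c f hi)

theorem IsqPoly.eval_zero [Semiring R] {f : R[X]} (hf : IsqPoly q f) (hq : q ≠ 0) :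
    f.eval 0 = 0 := by
  rw [← coeff_zero_eq_eval_zero]
  by_contra h
  obtain ⟨k, hk⟩ := hf 0 (mem_support_iff.mpr h)
  exact pow_ne_zero k hq hk.symm

theorem IsqPoly.eval_mul_of_pow_eq_self [CommSemiring R] {f : R[X]} (hf : IsqPoly q f) {l : R}
    (hl : l ^ q = l) (x : R) : f.eval (l * x) = l * f.eval x := by
  have hlk (k : ℕ) : l ^ q ^ k = l := by
    induction k with
    | zero => simp
    | succ k ih => rw [pow_succ, pow_mul, ih, hl]
  rw [eval_eq_sum, eval_eq_sum, Polynomial.sum_def, Polynomial.sum_def, mul_sum]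
  refine sum_congr rfl fun i hi => ?_
  obtain ⟨k, rfl⟩ := hf i hi
  rw [mul_pow, hlk]
  ring

variable {p : ℕ} [CommSemiring R] [ExpChar R p] {e : ℕ}

theorem IsqPoly.pow_expChar_pow {f : R[X]} (hf : IsqPoly (p ^ e) f) :
    IsqPoly (p ^ e) (f ^ p ^ e) := by
  intro i hi
  rw [← map_iterateFrobenius_expand] at hi
  have hi' := support_map_subset _ _ hi
  rw [mem_support_iff, coeff_expand (pow_pos (expChar_pos R p) e)] at hi'
  split_ifs at hi' with hd
  · obtain ⟨k, hk⟩ := hf _ (mem_support_iff.mpr hi')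
    exact ⟨k + 1, by rw [← Nat.div_mul_cancel hd, hk, pow_succ]⟩
  · exact absurd rfl hi'

theorem IsqPoly.eval_add {f : R[X]} (hf : IsqPoly (p ^ e) f) (x y : R) :
    f.eval (x + y) = f.eval x + f.eval y := by
  simp only [eval_eq_sum, Polynomial.sum_def, ← sum_add_distrib]
  refine sum_congr rfl fun i hi => ?_
  obtain ⟨k, rfl⟩ := hf i hi
  rw [← pow_mul, add_pow_expChar_pow, mul_add]

end IsqPoly

section qStep

variable {R : Type*} [CommRing R] (q : ℕ)

noncomputable def qStep (c : R) (f : R[X]) : R[X] := f ^ q - C c * f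

noncomputable def qSteps (cs : List R) (f : R[X]) : R[X] := cs.foldl (fun f c => qStep q c f) f

@[simp] theorem qSteps_nil (f : R[X]) : qSteps q [] f = f := rfl

@[simp] theorem qSteps_cons (c : R) (cs : List R) (f : R[X]) :
    qSteps q (c :: cs) f = qSteps q cs (qStep q c f) := rfl

theorem qSteps_append (cs₁ cs₂ : List R) (f : R[X]) :
    qSteps q (cs₁ ++ cs₂) f = qSteps q cs₂ (qSteps q cs₁ f) :=
  List.foldl_append

theorem qStep_comp (c : R) (f g : R[X]) : (qStep q c f).comp g = qStep q c (f.comp g) := by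
  rw [qStep, qStep, sub_comp, pow_comp, mul_comp, C_comp]

theorem qSteps_comp (cs : List R) (f g : R[X]) :
    (qSteps q cs f).comp g = qSteps q cs (f.comp g) := by
  induction cs generalizing f with
  | nil => rfl
  | cons c cs ih => rw [qSteps_cons, ih, qStep_comp, qSteps_cons]

variable {q} {f : R[X]}

theorem natDegree_C_mul_lt_natDegree_pow (hf : f.Monic) (hq : 1 < q) (hd : 0 < f.natDegree)
    (c : R) : (C c * f).natDegree < (f ^ q).natDegree :=
  calc (C c * f).natDegree ≤ f.natDegree := natDegree_C_mul_le c f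
    _ < q * f.natDegree := lt_mul_left hd hq
    _ = (f ^ q).natDegree := (hf.natDegree_pow q).symm

theorem Polynomial.Monic.qStep [Nontrivial R] (hf : f.Monic) (hq : 1 < q)
    (hd : 0 < f.natDegree) (c : R) : (qStep q c f).Monic :=
  (hf.pow q).sub_of_left (degree_lt_degree (natDegree_C_mul_lt_natDegree_pow hf hq hd c))

theorem natDegree_qStep (hf : f.Monic) (hq : 1 < q) (hd : 0 < f.natDegree) (c : R) :
    (qStep q c f).natDegree = q * f.natDegree := by
  rw [qStep, natDegree_sub_eq_left_of_natDegree_lt (natDegree_C_mul_lt_natDegree_pow hf hq hd c),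
    hf.natDegree_pow]

theorem Polynomial.Monic.qSteps [Nontrivial R] (hf : f.Monic) (hq : 1 < q) (hd : 0 < f.natDegree)
    (cs : List R) : (qSteps q cs f).Monic := by
  induction cs generalizing f with
  | nil => exact hf
  | cons c cs ih => exact ih (hf.qStep hq hd c) (by rw [natDegree_qStep hf hq hd]; positivity)

theorem natDegree_qSteps [Nontrivial R] (hf : f.Monic) (hq : 1 < q) (hd : 0 < f.natDegree)
    (cs : List R) : (qSteps q cs f).natDegree = q ^ cs.length * f.natDegree := by
  induction cs generalizing f with
  | nil => simp
  | cons c cs ih =>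
    rw [qSteps_cons, ih (hf.qStep hq hd c) (by rw [natDegree_qStep hf hq hd]; positivity),
      natDegree_qStep hf hq hd, List.length_cons, pow_succ, mul_assoc]

theorem monic_qSteps_X [Nontrivial R] (hq : 1 < q) (cs : List R) : (qSteps q cs X).Monic :=
  monic_X.qSteps hq (by simp) cs

theorem natDegree_qSteps_X [Nontrivial R] (hq : 1 < q) (cs : List R) :
    (qSteps q cs X).natDegree = q ^ cs.length := by
  rw [natDegree_qSteps monic_X hq (by simp), natDegree_X, mul_one]

theorem isqPoly_qStep {p e : ℕ} [ExpChar R p] (hf : IsqPoly (p ^ e) f) (c : R) :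
    IsqPoly (p ^ e) (qStep (p ^ e) c f) :=
  hf.pow_expChar_pow.sub (hf.C_mul c)

theorem isqPoly_qSteps {p e : ℕ} [ExpChar R p] (hf : IsqPoly (p ^ e) f) (cs : List R) :
    IsqPoly (p ^ e) (qSteps (p ^ e) cs f) := by
  induction cs generalizing f with
  | nil => exact hf
  | cons c cs ih => exact ih (isqPoly_qStep hf c)

end qStep

section RootsOfqStep

variable {F : Type*} [Field F] {p e : ℕ} [ExpChar F p] {G : F[X]}

theorem IsqPoly.eval_add_mul_of_eval_eq_zero (hG : IsqPoly (p ^ e) G) {v : F} (hv : G.eval v = 0)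
    {l : F} (hl : l ^ p ^ e = l) (w : F) : G.eval (v + l * w) = l * G.eval w := by
  rw [hG.eval_add, hv, zero_add, hG.eval_mul_of_pow_eq_self hl]

/-- `G(v + l w) = l G(w)`, and `Y = l G(w)` solves `Y^q = G(w)^(q-1) Y` because `l^q = l`. -/
theorem IsqPoly.eval_qStep_add_mul (hG : IsqPoly (p ^ e) G) {v : F} (hv : G.eval v = 0)
    {l : F} (hl : l ^ p ^ e = l) (w : F) :
    (qStep (p ^ e) (G.eval w ^ (p ^ e - 1)) G).eval (v + l * w) = 0 := by
  have hb : G.eval w ^ (p ^ e - 1) * G.eval w = G.eval w ^ p ^ e :=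
    pow_sub_one_mul (expChar_pow_pos F p e).ne' _
  rw [qStep, eval_sub, eval_mul, eval_pow, eval_C, hG.eval_add_mul_of_eval_eq_zero hv hl, mul_pow,
    hl]
  linear_combination l * hb.symm

variable [DecidableEq F]

theorem IsqPoly.add_mul_mem_roots_toFinset (hG : IsqPoly (p ^ e) G) {v w l : F}
    (hv : v ∈ G.roots.toFinset) (hw : w ∈ G.roots.toFinset) (hl : l ^ p ^ e = l) :
    v + l * w ∈ G.roots.toFinset := by
  simp only [Multiset.mem_toFinset, mem_roots', IsRoot.def] at hv hw ⊢
  rw [hG.eval_add_mul_of_eval_eq_zero hv.2 hl, hw.2, mul_zero]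
  exact ⟨hv.1, rfl⟩

theorem IsqPoly.injOn_add_mul (hG : IsqPoly (p ^ e) G) {w : F} (hw : G.eval w ≠ 0)
    (Λ : Finset F) (hΛ : ∀ l ∈ Λ, l ^ p ^ e = l) :
    Set.InjOn (fun z : F × F => z.2 + z.1 * w) ↑(Λ ×ˢ G.roots.toFinset) := by
  rintro ⟨l₁, v₁⟩ h₁ ⟨l₂, v₂⟩ h₂ (h : v₁ + l₁ * w = v₂ + l₂ * w)
  simp only [coe_product, Set.mem_prod, mem_coe, Multiset.mem_toFinset, mem_roots', IsRoot.def]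
    at h₁ h₂
  have hl : l₁ = l₂ := by
    have := congrArg G.eval h
    rw [hG.eval_add_mul_of_eval_eq_zero h₁.2.2 (hΛ _ h₁.1),
      hG.eval_add_mul_of_eval_eq_zero h₂.2.2 (hΛ _ h₂.1)] at this
    exact mul_right_cancel₀ hw this
  subst hl
  exact Prod.ext rfl (add_right_cancel h)

variable (hG : IsqPoly (p ^ e) G) (hGm : G.Monic) (hq : 1 < p ^ e) (hd : 0 < G.natDegree)
  (hR : #G.roots.toFinset = G.natDegree) {Λ : Finset F} (hΛ : ∀ l ∈ Λ, l ^ p ^ e = l)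
  (hΛcard : #Λ = p ^ e)
include hG hGm hq hd hR hΛ hΛcard

theorem IsqPoly.roots_toFinset_qStep {w : F} (hw : G.eval w ≠ 0) :
    (qStep (p ^ e) (G.eval w ^ (p ^ e - 1)) G).roots.toFinset =
      (Λ ×ˢ G.roots.toFinset).image (fun z : F × F => z.2 + z.1 * w) := by
  set G' := qStep (p ^ e) (G.eval w ^ (p ^ e - 1)) G
  have hG' : G' ≠ 0 := (hGm.qStep hq hd _).ne_zero
  refine (eq_of_subset_of_card_le (fun x hx => ?_) ?_).symm
  · obtain ⟨⟨l, v⟩, hz, rfl⟩ := mem_image.mp hx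
    simp only [mem_product, Multiset.mem_toFinset, mem_roots', IsRoot.def] at hz ⊢
    exact ⟨hG', hG.eval_qStep_add_mul hz.2.2 (hΛ l hz.1) w⟩
  · rw [card_image_of_injOn (hG.injOn_add_mul hw Λ hΛ), card_product, hR, hΛcard,
      ← natDegree_qStep hGm hq hd]
    exact (Multiset.toFinset_card_le _).trans (card_roots' G')

theorem IsqPoly.card_roots_toFinset_qStep {w : F} (hw : G.eval w ≠ 0) :
    #(qStep (p ^ e) (G.eval w ^ (p ^ e - 1)) G).roots.toFinset =
      (qStep (p ^ e) (G.eval w ^ (p ^ e - 1)) G).natDegree := by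
  rw [hG.roots_toFinset_qStep hGm hq hd hR hΛ hΛcard hw,
    card_image_of_injOn (hG.injOn_add_mul hw Λ hΛ), card_product, hR, hΛcard,
    natDegree_qStep hGm hq hd]

theorem IsqPoly.exists_qStep_roots_toFinset_subset {K : Finset F}
    (hK : ∀ v ∈ K, ∀ w ∈ K, ∀ l, l ^ p ^ e = l → v + l * w ∈ K)
    (hRK : G.roots.toFinset ⊆ K) (hlt : #G.roots.toFinset < #K) :
    ∃ c, #(qStep (p ^ e) c G).roots.toFinset = (qStep (p ^ e) c G).natDegree ∧
      (qStep (p ^ e) c G).roots.toFinset ⊆ K := by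
  obtain ⟨w, hwK, hwR⟩ := exists_mem_notMem_of_card_lt_card hlt
  have hw : G.eval w ≠ 0 := fun h => hwR (by simp [hGm.ne_zero, h])
  refine ⟨_, hG.card_roots_toFinset_qStep hGm hq hd hR hΛ hΛcard hw, ?_⟩
  rw [hG.roots_toFinset_qStep hGm hq hd hR hΛ hΛcard hw, image_subset_iff]
  rintro ⟨l, v⟩ hz
  rw [mem_product] at hz
  exact hK v (hRK hz.2) w hwK l (hΛ l hz.1)

end RootsOfqStep

section qTrace

variable (R : Type*) [CommSemiring R]

noncomputable def qTrace (q n : ℕ) : R[X] := ∑ i ∈ range n, X ^ q ^ i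

variable {R} {q : ℕ}

theorem isqPoly_qTrace (n : ℕ) : IsqPoly q (qTrace R q n) :=
  Finset.sum_induction _ _ (fun _ _ => IsqPoly.add) IsqPoly.zero fun k _ => isqPoly_X_pow_pow k

theorem qTrace_succ (n : ℕ) : qTrace R q (n + 1) = X ^ q ^ n + qTrace R q n := by
  rw [qTrace, sum_range_succ, add_comm, qTrace]

variable [Nontrivial R] (hq : 1 < q)
include hq

theorem degree_qTrace_lt (n : ℕ) : (qTrace R q n).degree < ↑(q ^ n) := by
  refine (degree_sum_le _ _).trans_lt ((Finset.sup_lt_iff (WithBot.bot_lt_coe _)).mpr ?_)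
  intro i hi
  rw [degree_X_pow, Nat.cast_lt]
  exact Nat.pow_lt_pow_right hq (mem_range.mp hi)

theorem monic_qTrace_succ (n : ℕ) : (qTrace R q (n + 1)).Monic := by
  rw [qTrace_succ]
  exact monic_X_pow_add (degree_qTrace_lt hq n)

theorem natDegree_qTrace_succ (n : ℕ) : (qTrace R q (n + 1)).natDegree = q ^ n := by
  have hlt : (qTrace R q n).degree < (X ^ q ^ n : R[X]).degree := by
    rw [degree_X_pow]
    exact degree_qTrace_lt hq n
  rw [qTrace_succ, natDegree_add_eq_left_of_degree_lt hlt, natDegree_X_pow]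

end qTrace

theorem eval_qTrace_pow {R : Type*} [CommRing R] {p e : ℕ} [ExpChar R p] {n : ℕ} {x : R}
    (hx : x ^ (p ^ e) ^ n = x) :
    (qTrace R (p ^ e) n).eval x ^ p ^ e = (qTrace R (p ^ e) n).eval x := by
  have hshift := sum_range_succ' (fun i => x ^ (p ^ e) ^ i) n
  rw [sum_range_succ, hx, pow_zero, pow_one, add_left_inj] at hshift
  simp only [qTrace, eval_finsetSum, eval_pow, eval_X]
  rw [sum_pow_char_pow, hshift]
  exact sum_congr rfl fun i _ => by rw [← pow_mul, ← pow_succ]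

section FiniteField

variable {F : Type*} [Field F] [DecidableEq F] {p e : ℕ} {n : ℕ} (hq : 1 < p ^ e)
include hq

theorem card_roots_qTrace_le : #(qTrace F (p ^ e) (n + 1)).roots.toFinset ≤ (p ^ e) ^ n :=
  (Multiset.toFinset_card_le _).trans ((card_roots' _).trans_eq (natDegree_qTrace_succ hq n))

theorem mem_roots_toFinset_X_pow_sub_X {l : F} :
    l ∈ (X ^ p ^ e - X : F[X]).roots.toFinset ↔ l ^ p ^ e = l := by
  simp [FiniteField.X_pow_card_sub_X_ne_zero F hq, sub_eq_zero]

theorem card_roots_X_pow_sub_X_le : #(X ^ p ^ e - X : F[X]).roots.toFinset ≤ p ^ e :=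
  (Multiset.toFinset_card_le _).trans
    ((card_roots' _).trans_eq (FiniteField.X_pow_card_sub_X_natDegree_eq F hq))

variable [Fintype F] [ExpChar F p] (hF : Fintype.card F = (p ^ e) ^ (n + 1))
include hF

theorem card_le_card_roots_qTrace_mul_card_roots_X_pow_sub_X :
    (p ^ e) ^ (n + 1) ≤
      #(qTrace F (p ^ e) (n + 1)).roots.toFinset * #(X ^ p ^ e - X : F[X]).roots.toFinset := by
  let T : F →+ F :=
    AddMonoidHom.mk' (fun x => (qTrace F (p ^ e) (n + 1)).eval x) (isqPoly_qTrace _).eval_add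
  have hker : ({x | T x = 0} : Finset F) = (qTrace F (p ^ e) (n + 1)).roots.toFinset := by
    ext x
    simp [T, (monic_qTrace_succ hq n).ne_zero]
  rw [← hF, ← hker]
  refine T.card_le_card_ker_mul fun x => ?_
  rw [mem_roots_toFinset_X_pow_sub_X hq]
  exact eval_qTrace_pow (by rw [← hF]; exact FiniteField.pow_card x)

theorem card_roots_qTrace : #(qTrace F (p ^ e) (n + 1)).roots.toFinset = (p ^ e) ^ n := by
  have h := card_le_card_roots_qTrace_mul_card_roots_X_pow_sub_X hq hF
  rw [pow_succ] at h
  exact (card_roots_qTrace_le hq).antisymm <| Nat.le_of_mul_le_mul_right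
    (h.trans (Nat.mul_le_mul_left _ (card_roots_X_pow_sub_X_le hq))) (by omega)

theorem card_roots_X_pow_sub_X : #(X ^ p ^ e - X : F[X]).roots.toFinset = p ^ e := by
  have h := card_le_card_roots_qTrace_mul_card_roots_X_pow_sub_X hq hF
  rw [pow_succ] at h
  exact (card_roots_X_pow_sub_X_le hq).antisymm <| Nat.le_of_mul_le_mul_left
    (h.trans (Nat.mul_le_mul_right _ (card_roots_qTrace_le hq))) (by positivity)

theorem splits_qTrace : (qTrace F (p ^ e) (n + 1)).Splits := by
  refine splits_iff_card_roots.mpr ((card_roots' _).antisymm ?_)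
  rw [natDegree_qTrace_succ hq, ← card_roots_qTrace hq hF]
  exact Multiset.toFinset_card_le _

theorem exists_qSteps_roots_toFinset_subset {i : ℕ} (hi : i ≤ n) :
    ∃ cs : List F, cs.length = i ∧ #(qSteps (p ^ e) cs X).roots.toFinset = (p ^ e) ^ i ∧
      (qSteps (p ^ e) cs X).roots.toFinset ⊆ (qTrace F (p ^ e) (n + 1)).roots.toFinset := by
  induction i with
  | zero =>
    refine ⟨[], rfl, by simp, fun x hx => ?_⟩
    obtain rfl : x = 0 := by simpa using hx
    rw [Multiset.mem_toFinset, mem_roots', IsRoot.def]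
    exact ⟨(monic_qTrace_succ hq n).ne_zero, (isqPoly_qTrace _).eval_zero (by omega)⟩
  | succ i ih =>
    obtain ⟨cs, rfl, hcard, hsub⟩ := ih (by omega)
    have hPm := monic_qSteps_X hq cs
    have hPd := natDegree_qSteps_X hq cs
    have hPpos : 0 < (qSteps (p ^ e) cs X).natDegree := by rw [hPd]; positivity
    obtain ⟨c, hc, hcK⟩ :=
      (isqPoly_qSteps isqPoly_X cs).exists_qStep_roots_toFinset_subset hPm hq hPpos
        (hcard.trans hPd.symm) (fun l => (mem_roots_toFinset_X_pow_sub_X hq).mp)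
        (card_roots_X_pow_sub_X hq hF)
        (fun _ hv _ hw _ => (isqPoly_qTrace _).add_mul_mem_roots_toFinset hv hw) hsub
        (by rw [hcard, card_roots_qTrace hq hF]; exact Nat.pow_lt_pow_right hq (by omega))
    refine ⟨cs ++ [c], by simp, ?_, ?_⟩ <;> rw [qSteps_append, qSteps_cons, qSteps_nil]
    · rw [hc, natDegree_qStep hPm hq hPpos, hPd, pow_succ']
    · exact hcK

theorem exists_qSteps_eq_qTrace :
    ∃ cs : List F, cs.length = n ∧ qSteps (p ^ e) cs X = qTrace F (p ^ e) (n + 1) := by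
  obtain ⟨cs, hlen, hcard, hsub⟩ := exists_qSteps_roots_toFinset_subset hq hF le_rfl
  have hPm := monic_qSteps_X hq cs
  have hPd : (qSteps (p ^ e) cs X).natDegree = (p ^ e) ^ n := by
    rw [natDegree_qSteps_X hq, hlen]
  refine ⟨cs, hlen, eq_of_degree_le_of_eval_finset_eq (qSteps (p ^ e) cs X).roots.toFinset
    ?_ ?_ ?_ fun x hx => ?_⟩
  · rw [degree_eq_natDegree hPm.ne_zero, hPd, hcard]
  · rw [degree_eq_natDegree hPm.ne_zero, degree_eq_natDegree (monic_qTrace_succ hq n).ne_zero,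
      hPd, natDegree_qTrace_succ hq]
  · rw [hPm.leadingCoeff, (monic_qTrace_succ hq n).leadingCoeff]
  · have hTx := hsub hx
    simp only [Multiset.mem_toFinset, mem_roots', IsRoot.def] at hx hTx
    rw [hx.2, hTx.2]

end FiniteField

theorem exists_monic_qpoly_factorization_of_Tn_general
    (p q e n s : ℕ) (hp : p.Prime) (he : 0 < e) (hq : q = p ^ e)
    (hsn : s < n - 1)
    (F : Type*) [Field F] [Fintype F] (hF : Fintype.card F = q ^ n) :
    ∃ g gs : Polynomial F,
      g.Monic ∧ gs.Monic ∧ IsqPoly q g ∧ IsqPoly q gs ∧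
      gs.comp g = ∑ i ∈ Finset.range n, X ^ q ^ i ∧
      gs.natDegree = q ^ s ∧
      Splits (gs.map (RingHom.id F)) := by
  classical
  subst hq
  obtain ⟨n, rfl⟩ : ∃ k, n = k + 1 := ⟨n - 1, by omega⟩
  have hq : 1 < p ^ e := Nat.one_lt_pow he.ne' hp.one_lt
  have := Fact.mk hp
  have : CharP F p := charP_of_card_eq_prime_pow (by rw [hF, ← pow_mul])
  obtain ⟨cs, hlen, hT⟩ := exists_qSteps_eq_qTrace hq hF
  have hcomp : (qSteps (p ^ e) (cs.drop (n - s)) X).comp (qSteps (p ^ e) (cs.take (n - s)) X) =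
      qTrace F (p ^ e) (n + 1) := by
    rw [qSteps_comp, X_comp, ← qSteps_append, List.take_append_drop, hT]
  refine ⟨qSteps (p ^ e) (cs.take (n - s)) X, qSteps (p ^ e) (cs.drop (n - s)) X,
    monic_qSteps_X hq _, monic_qSteps_X hq _, isqPoly_qSteps isqPoly_X _,
    isqPoly_qSteps isqPoly_X _, hcomp, ?_, ?_⟩
  · rw [natDegree_qSteps_X hq, List.length_drop, hlen]
    congr 1
    omega
  · rw [Polynomial.map_id]
    exact (hcomp ▸ splits_qTrace hq hF).of_comp (by rw [natDegree_qSteps_X hq]; positivity)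

/-- Lemma 2.8 (Lemma `quebra`): for `0 < s < n - 1` there exist monic `q`-polynomials
`g` and `gs` over `F_{q^n}` with `gs.comp g = T_n`, `deg gs = q^s`, and `gs` split. -/
theorem exists_monic_qpoly_factorization_of_Tn
    (p q e n s : ℕ) (hp : p.Prime) (he : 0 < e) (hq : q = p ^ e)
    (hn : 2 ≤ n) (hs : 0 < s) (hsn : s < n - 1)
    (F : Type*) [Field F] [Fintype F] (hF : Fintype.card F = q ^ n) :
    ∃ g gs : Polynomial F,
      g.Monic ∧ gs.Monic ∧ IsqPoly q g ∧ IsqPoly q gs ∧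
      gs.comp g = ∑ i ∈ Finset.range n, X ^ q ^ i ∧
      gs.natDegree = q ^ s ∧
      Splits (gs.map (RingHom.id F)) :=
  exists_monic_qpoly_factorization_of_Tn_general p q e n s hp he hq hsn F hF
end

section
/- Let q be a power of a prime p, let n ≥ 1 and 1 ≤ s ≤ n be integers, and let g_s(y) = y^{q^s} + a_{s-1} y^{q^{s-1}} + ... + a_1 y^q + a_0 y ∈ F_{q^n}[y] be a separable q-polynomial (i.e., a_0 ≠ 0). Then there exists a polynomial G(x,y) ∈ F_{q^n}[x,y] such that G(x,y)^q - G(x,y) = x^{q^n} g_s(y) - y · R_s(x)^{q^{n-s}}, where R_s(x) = (a_0 x)^{q^s} + (a_1 x)^{q^{s-1}} + ... + (a_{s-1} x)^q + x. -/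
open MvPolynomial

/-- Lemma 2.9 (Lemma `LemaSqS`): for a separable `q`-polynomial
`g_s(y) = y^{q^s} + a_{s-1} y^{q^{s-1}} + ⋯ + a_0 y` over `F_{q^n}` there is a bivariate
polynomial `G(x,y)` with
`G^q - G = x^{q^n}·g_s(y) - y·R_s(x)^{q^{n-s}}`, where
`R_s(x) = (a_0 x)^{q^s} + (a_1 x)^{q^{s-1}} + ⋯ + (a_{s-1} x)^q + x`.
Here `X 0` plays the role of `x` and `X 1` the role of `y`. -/
theorem exists_G_artin_schreier_identity
    (p q e n s : ℕ) (hp : p.Prime) (he : 0 < e) (hq : q = p ^ e)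
    (hn : 1 ≤ n) (hs1 : 1 ≤ s) (hsn : s ≤ n)
    (F : Type*) [Field F] [Fintype F] (hF : Fintype.card F = q ^ n)
    (a : ℕ → F) (ha : a 0 ≠ 0) :
    ∃ G : MvPolynomial (Fin 2) F,
      G ^ q - G =
        (X 0) ^ q ^ n *
          ((X 1) ^ q ^ s + ∑ i ∈ Finset.range s, C (a i) * (X 1) ^ q ^ i)
        - (X 1) *
          ((∑ i ∈ Finset.range s, (C (a i) * X 0) ^ q ^ (s - i)) + X 0) ^ q ^ (n - s) := by
  classical
  -- characteristic
  have hrp : (ringChar F).Prime := CharP.char_is_prime F (ringChar F)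
  obtain ⟨m, -, hcard⟩ := FiniteField.card F (ringChar F)
  have hpr : ringChar F = p := by
    have h1 : p ∣ Fintype.card F := by
      rw [hF, hq, ← pow_mul]
      exact dvd_pow_self p (by positivity)
    rw [hcard] at h1
    exact ((Nat.prime_dvd_prime_iff_eq hp hrp).mp (hp.dvd_of_dvd_pow h1)).symm
  haveI : CharP F p := hpr ▸ ringChar.charP F
  haveI : Fact p.Prime := ⟨hp⟩
  haveI : ExpChar (MvPolynomial (Fin 2) F) p := ExpChar.prime hp
  -- the construction
  set b : ℕ → F := fun i => if i = s then 1 else a i with hb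
  set u : ℕ → MvPolynomial (Fin 2) F :=
    fun i => C (b i ^ q ^ (n - i)) * X 0 ^ q ^ (n - i) * X 1 with hu
  refine ⟨∑ i ∈ Finset.range (s+1), ∑ j ∈ Finset.range i, u i ^ q ^ j, ?_⟩
  have hGq : (∑ i ∈ Finset.range (s+1), ∑ j ∈ Finset.range i, u i ^ q ^ j) ^ q
      = ∑ i ∈ Finset.range (s+1), ∑ j ∈ Finset.range i, u i ^ q ^ (j+1) := by
    rw [hq, sum_pow_char_pow]
    refine Finset.sum_congr rfl fun i _ => ?_
    rw [sum_pow_char_pow]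
    refine Finset.sum_congr rfl fun j _ => ?_
    rw [← pow_mul, ← hq, ← pow_succ]
  rw [hGq, ← Finset.sum_sub_distrib]
  have htel : ∀ i ∈ Finset.range (s+1),
      (∑ j ∈ Finset.range i, u i ^ q ^ (j+1)) - ∑ j ∈ Finset.range i, u i ^ q ^ j
        = u i ^ q ^ i - u i := by
    intro i _
    rw [← Finset.sum_sub_distrib, Finset.sum_range_sub (fun j => u i ^ q ^ j)]
    simp
  rw [Finset.sum_congr rfl htel]
  -- compute u i ^ q ^ i
  have key : ∀ i ∈ Finset.range (s+1),
      u i ^ q ^ i - u i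
        = C (b i) * X 0 ^ q ^ n * X 1 ^ q ^ i
          - C (b i ^ q ^ (n - i)) * X 0 ^ q ^ (n - i) * X 1 := by
    intro i hi
    have hin : i ≤ n := le_trans (Nat.lt_succ_iff.mp (Finset.mem_range.mp hi)) hsn
    have hexp : q ^ (n - i) * q ^ i = q ^ n := by
      rw [← pow_add, Nat.sub_add_cancel hin]
    have hbi : b i ^ q ^ n = b i := by rw [← hF, FiniteField.pow_card]
    rw [hu]
    simp only [mul_pow, ← map_pow, ← pow_mul, hexp, ← pow_mul, hbi]
  rw [Finset.sum_congr rfl key]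
  -- expand RHS
  have hRs : ((∑ i ∈ Finset.range s, (C (a i) * X 0 : MvPolynomial (Fin 2) F) ^ q ^ (s - i)) + X 0) ^ q ^ (n - s)
      = (∑ i ∈ Finset.range s, C (a i ^ q ^ (n - i)) * X 0 ^ q ^ (n - i)) + X 0 ^ q ^ (n - s) := by
    have hqe : ∀ k : ℕ, q ^ k = p ^ (e * k) := fun k => by rw [hq, ← pow_mul]
    rw [hqe (n - s), add_pow_char_pow, sum_pow_char_pow]
    congr 1
    refine Finset.sum_congr rfl fun i hi => ?_
    have his : i ≤ s := le_of_lt (Finset.mem_range.mp hi)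
    have hexp : q ^ (s - i) * q ^ (n - s) = q ^ (n - i) := by
      rw [← pow_add]
      congr 1
      omega
    rw [← hqe (n - s), ← pow_mul, hexp, mul_pow, ← map_pow]
  rw [hRs]
  -- conclude by algebra
  rw [Finset.sum_range_succ, Finset.sum_sub_distrib]
  simp only [hb, if_pos rfl, one_pow, map_one, one_mul]
  have hbne : ∀ i ∈ Finset.range s, (if i = s then (1:F) else a i) = a i := by
    intro i hi
    exact if_neg (Nat.ne_of_lt (Finset.mem_range.mp hi))
  rw [mul_add, Finset.mul_sum, mul_add, Finset.mul_sum]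
  have e1 : (∑ x ∈ Finset.range s,
      C (if x = s then (1:F) else a x) * (X 0 : MvPolynomial (Fin 2) F) ^ q ^ n * X 1 ^ q ^ x)
      = ∑ x ∈ Finset.range s, C (a x) * X 0 ^ q ^ n * X 1 ^ q ^ x :=
    Finset.sum_congr rfl fun i hi => by rw [hbne i hi]
  have e2 : (∑ x ∈ Finset.range s,
      C ((if x = s then (1:F) else a x) ^ q ^ (n - x)) * (X 0 : MvPolynomial (Fin 2) F) ^ q ^ (n - x) * X 1)
      = ∑ x ∈ Finset.range s, C (a x ^ q ^ (n - x)) * X 0 ^ q ^ (n - x) * X 1 :=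
    Finset.sum_congr rfl fun i hi => by rw [hbne i hi]
  rw [e1, e2]
  have e3 : (∑ i ∈ Finset.range s, (X 0 : MvPolynomial (Fin 2) F) ^ q ^ n * (C (a i) * X 1 ^ q ^ i))
      = ∑ i ∈ Finset.range s, C (a i) * X 0 ^ q ^ n * X 1 ^ q ^ i :=
    Finset.sum_congr rfl fun i _ => by ring
  have e4 : (∑ i ∈ Finset.range s, (X 1 : MvPolynomial (Fin 2) F) * (C (a i ^ q ^ (n - i)) * X 0 ^ q ^ (n - i)))
      = ∑ i ∈ Finset.range s, C (a i ^ q ^ (n - i)) * X 0 ^ q ^ (n - i) * X 1 :=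
    Finset.sum_congr rfl fun i _ => by ring
  rw [e3, e4]
  ring
end

section
/- Let q be a power of a prime p, let n ≥ 2, let r be an integer with ⌈n/2⌉ ≤ r ≤ n-1 and gcd(n,r) = 1, let s ≥ 1, and let g_s(y) = y^{q^s} + a_{s-1} y^{q^{s-1}} + ... + a_1 y^q + a_0 y ∈ F_{q^n}[y] be a separable q-polynomial (a_0 ≠ 0) that splits into linear factors over F_{q^n}. Then there exists a unique pair of nonzero q-polynomials Q(y), U(y) ∈ F_{q^n}[y] with deg(U(y)) ≤ q^{n-r-1} such that Q(y)^{q^{n-r}} = y + U(g_s(y)). (Necessarily deg(U) is a power q^u of q with u ≤ n-r-1, and deg(Q) ≤ q^{s-1}.) -/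
/-!
Everything happens at the exponents `q ^ k`. Since `f ↦ f ^ q ^ m` is `expand (q ^ m)` followed
by a Frobenius on the coefficients, `Q ^ q ^ m` has no monomial `X ^ q ^ k` with `k < m`.
If the lowest monomial of a `q`-polynomial `U` is `c * X ^ q ^ k`, then the coefficient of
`X ^ q ^ k` in `U.comp g` is `c * (g.coeff 1) ^ q ^ k ≠ 0`. Hence a `q`-polynomial `U` of degree
`< q ^ m` is determined by the first `m` such coefficients of `U.comp g`: this is uniqueness, and,
over a finite field, `U ↦ (those coefficients)` is an injective, hence surjective, self-map of
`F ^ m`. Choosing `U` to cancel the first `m` coefficients of `X + U.comp g` leaves a polynomial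
in `X ^ q ^ m`, which is a `q ^ m`-th power because the Frobenius of a finite field is bijective.
-/

open Polynomial

theorem Nat.exists_eq_pow_of_pow_mul_eq_pow {q m i t : ℕ} (hq : 0 < q) (h : q ^ m * i = q ^ t) :
    ∃ k, i = q ^ k := by
  rcases (Nat.one_le_iff_ne_zero.mpr hq.ne').eq_or_lt with rfl | h1q
  · exact ⟨0, by simpa using h⟩
  have hmt : m ≤ t := by
    have hi : i ≠ 0 := by rintro rfl; exact (pow_pos hq t).ne (by simpa using h)
    exact (Nat.pow_le_pow_iff_right h1q).mp (h ▸ Nat.le_mul_of_pos_right _ (Nat.pos_of_ne_zero hi))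
  refine ⟨t - m, Nat.eq_of_mul_eq_mul_left (pow_pos hq m) ?_⟩
  rw [h, ← pow_add, Nat.add_sub_cancel' hmt]

namespace Polynomial

section FrobeniusCoeff

variable {R : Type*} [CommSemiring R] {p e q : ℕ} [ExpChar R p]

theorem coeff_pow_q_pow_mul (hq : q = p ^ e) (f : R[X]) (m i : ℕ) :
    (f ^ q ^ m).coeff (q ^ m * i) = f.coeff i ^ q ^ m := by
  subst hq
  rw [← pow_mul, ← map_iterateFrobenius_expand, coeff_map,
    coeff_expand_mul' (expChar_pow_pos R p _), iterateFrobenius_def]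

theorem coeff_pow_q_pow_of_not_dvd (hq : q = p ^ e) (f : R[X]) {m j : ℕ} (h : ¬ q ^ m ∣ j) :
    (f ^ q ^ m).coeff j = 0 := by
  subst hq
  rw [← pow_mul] at h ⊢
  rw [← map_iterateFrobenius_expand, coeff_map, coeff_expand (expChar_pow_pos R p _), if_neg h,
    map_zero]

end FrobeniusCoeff

theorem coeff_comp_eq_sum {R : Type*} [Semiring R] (f g : R[X]) (j : ℕ) :
    (f.comp g).coeff j = ∑ i ∈ f.support, f.coeff i * (g ^ i).coeff j := by
  rw [comp_eq_sum_left, Polynomial.sum, finsetSum_coeff]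
  simp only [coeff_C_mul]

end Polynomial

namespace IsqPoly

section Semiring

variable {R : Type*} [Semiring R] {q : ℕ} {f g : R[X]}

theorem X_pow_q_pow (k : ℕ) : IsqPoly q (X ^ q ^ k : R[X]) := fun i hi => ⟨k, by
  by_contra h
  exact mem_support_iff.mp hi (by rw [coeff_X_pow, if_neg h])⟩

theorem X : IsqPoly q (X : R[X]) := by simpa using X_pow_q_pow (R := R) (q := q) 0

theorem add_s2 (hf : IsqPoly q f) (hg : IsqPoly q g) : IsqPoly q (f + g) := fun i hi =>
  (Finset.mem_union.mp (support_add hi)).elim (hf i) (hg i)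

theorem C_mul_s2 (a : R) (hf : IsqPoly q f) : IsqPoly q (C a * f) := fun i hi =>
  hf i (mem_support_iff.mpr fun h => mem_support_iff.mp hi (by rw [coeff_C_mul, h, mul_zero]))

theorem sum {ι : Type*} (s : Finset ι) {f : ι → R[X]} (hf : ∀ i ∈ s, IsqPoly q (f i)) :
    IsqPoly q (∑ i ∈ s, f i) := fun j hj => by
  rw [mem_support_iff, finsetSum_coeff] at hj
  obtain ⟨i, hi, hij⟩ := Finset.exists_ne_zero_of_sum_ne_zero hj
  exact hf i hi j (mem_support_iff.mpr hij)

theorem exists_natDegree_eq_pow (hf : IsqPoly q f) (h0 : f ≠ 0) : ∃ u, f.natDegree = q ^ u :=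
  hf _ (natDegree_mem_support_of_nonzero h0)

end Semiring

theorem sub_s2 {R : Type*} [Ring R] {q : ℕ} {f g : R[X]} (hf : IsqPoly q f) (hg : IsqPoly q g) :
    IsqPoly q (f - g) := fun i hi => by
  rw [mem_support_iff, coeff_sub] at hi
  by_cases hfi : f.coeff i = 0
  · exact hg i (mem_support_iff.mpr fun h => hi (by rw [hfi, h, sub_zero]))
  · exact hf i (mem_support_iff.mpr hfi)

section ExpChar

variable {R : Type*} [CommSemiring R] {p e q : ℕ} [ExpChar R p] {f g : R[X]}

theorem pow_q_pow (hq : q = p ^ e) (hf : IsqPoly q f) (m : ℕ) : IsqPoly q (f ^ q ^ m) := by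
  intro j hj
  rw [mem_support_iff] at hj
  by_cases hdvd : q ^ m ∣ j
  · obtain ⟨i, rfl⟩ := hdvd
    rw [coeff_pow_q_pow_mul hq] at hj
    have hq0 : 0 < q := hq ▸ expChar_pow_pos R p e
    obtain ⟨k, rfl⟩ := hf i (mem_support_iff.mpr (ne_zero_pow (pow_pos hq0 m).ne' hj))
    exact ⟨m + k, (pow_add q m k).symm⟩
  · exact absurd (coeff_pow_q_pow_of_not_dvd hq f hdvd) hj

theorem comp (hq : q = p ^ e) (hf : IsqPoly q f) (hg : IsqPoly q g) : IsqPoly q (f.comp g) := by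
  rw [comp_eq_sum_left]
  refine sum _ fun i hi => ?_
  obtain ⟨k, rfl⟩ := hf i hi
  exact (hg.pow_q_pow hq k).C_mul_s2 _

theorem of_pow_q_pow [NoZeroDivisors R] (hq : q = p ^ e) {m : ℕ} (hf : IsqPoly q (f ^ q ^ m)) :
    IsqPoly q f := by
  intro i hi
  have hpow := pow_ne_zero (q ^ m) (mem_support_iff.mp hi)
  rw [← coeff_pow_q_pow_mul hq] at hpow
  obtain ⟨t, ht⟩ := hf _ (mem_support_iff.mpr hpow)
  exact Nat.exists_eq_pow_of_pow_mul_eq_pow (hq ▸ expChar_pow_pos R p e) ht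

end ExpChar

end IsqPoly

section Uniqueness

variable {R : Type*} {p e q : ℕ}

theorem IsqPoly.coeff_comp_q_pow [CommSemiring R] [ExpChar R p] (hq : q = p ^ e) (h1q : 1 < q)
    {f : R[X]} (hf : IsqPoly q f) {k : ℕ} (hlow : ∀ j < k, f.coeff (q ^ j) = 0) (g : R[X]) :
    (f.comp g).coeff (q ^ k) = f.coeff (q ^ k) * g.coeff 1 ^ q ^ k := by
  rw [coeff_comp_eq_sum, Finset.sum_eq_single (q ^ k)]
  · rw [← coeff_pow_q_pow_mul hq g k 1, mul_one]
  · intro i hi hik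
    obtain ⟨j, rfl⟩ := hf i hi
    rcases lt_trichotomy j k with hjk | rfl | hkj
    · rw [hlow j hjk, zero_mul]
    · exact absurd rfl hik
    · rw [coeff_pow_q_pow_of_not_dvd hq g
        (mt (Nat.pow_dvd_pow_iff_le_right h1q).mp (not_le.mpr hkj)), mul_zero]
  · intro hk
    rw [notMem_support_iff.mp hk, zero_mul]

theorem IsqPoly.eq_zero_of_coeff_comp_eq_zero [CommSemiring R] [NoZeroDivisors R] [ExpChar R p]
    (hq : q = p ^ e) (h1q : 1 < q) {f g : R[X]} {m : ℕ} (hf : IsqPoly q f)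
    (hdeg : f.natDegree < q ^ m) (hg : g.coeff 1 ≠ 0)
    (hcomp : ∀ k < m, (f.comp g).coeff (q ^ k) = 0) : f = 0 := by
  classical
  by_contra hf0
  have hex : ∃ k, f.coeff (q ^ k) ≠ 0 := by
    obtain ⟨u, hu⟩ := hf.exists_natDegree_eq_pow hf0
    exact ⟨u, hu ▸ mt leadingCoeff_eq_zero.mp hf0⟩
  set k := Nat.find hex
  have hk : f.coeff (q ^ k) ≠ 0 := Nat.find_spec hex
  have hkm : k < m :=
    (Nat.pow_lt_pow_iff_right h1q).mp ((le_natDegree_of_ne_zero hk).trans_lt hdeg)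
  have hlow : ∀ j < k, f.coeff (q ^ j) = 0 := fun j hj => not_not.mp (Nat.find_min hex hj)
  have hcoeff := hcomp k hkm
  rw [hf.coeff_comp_q_pow hq h1q hlow] at hcoeff
  exact mul_ne_zero hk (pow_ne_zero _ hg) hcoeff

theorem eq_of_pow_q_pow_eq_X_add_comp [CommRing R] [IsDomain R] [ExpChar R p]
    (hq : q = p ^ e) (h1q : 1 < q) {g : R[X]} (hg : g.coeff 1 ≠ 0) {m : ℕ} {Q Q' U U' : R[X]}
    (hU : IsqPoly q U) (hU' : IsqPoly q U') (hUdeg : U.natDegree < q ^ m)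
    (hU'deg : U'.natDegree < q ^ m) (h : Q ^ q ^ m = X + U.comp g)
    (h' : Q' ^ q ^ m = X + U'.comp g) : Q = Q' ∧ U = U' := by
  have hdiff : (Q - Q') ^ q ^ m = (U - U').comp g := by
    rw [hq, ← pow_mul, sub_pow_expChar_pow, pow_mul, ← hq, h, h', sub_comp]
    ring
  have hUU' : U - U' = 0 := by
    refine (hU.sub_s2 hU').eq_zero_of_coeff_comp_eq_zero hq h1q
      ((natDegree_sub_le U U').trans_lt (max_lt hUdeg hU'deg)) hg fun k hk => ?_
    rw [← hdiff]
    exact coeff_pow_q_pow_of_not_dvd hq _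
      (mt (Nat.pow_dvd_pow_iff_le_right h1q).mp (not_le.mpr hk))
  rw [hUU', zero_comp, pow_eq_zero_iff (pow_pos (hq ▸ expChar_pow_pos R p e) m).ne'] at hdiff
  exact ⟨sub_eq_zero.mp hdiff, sub_eq_zero.mp hUU'⟩

end Uniqueness

section Existence

variable {R : Type*} {p e q : ℕ}

noncomputable def qPolyOfFn [Semiring R] (q : ℕ) {m : ℕ} (u : Fin m → R) : R[X] :=
  ∑ k : Fin m, C (u k) * X ^ q ^ (k : ℕ)

theorem isqPoly_qPolyOfFn [Semiring R] {m : ℕ} (u : Fin m → R) : IsqPoly q (qPolyOfFn q u) :=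
  IsqPoly.sum _ fun k _ => (IsqPoly.X_pow_q_pow k).C_mul_s2 _

theorem coeff_qPolyOfFn_q_pow [Semiring R] (h1q : 1 < q) {m : ℕ} (u : Fin m → R) (k : Fin m) :
    (qPolyOfFn q u).coeff (q ^ (k : ℕ)) = u k := by
  rw [qPolyOfFn, finsetSum_coeff, Finset.sum_eq_single k]
  · rw [coeff_C_mul_X_pow, if_pos rfl]
  · intro j _ hjk
    rw [coeff_C_mul_X_pow, if_neg fun h => hjk (Fin.ext (Nat.pow_right_injective h1q h).symm)]
  · exact fun hk => absurd (Finset.mem_univ k) hk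

theorem natDegree_qPolyOfFn_le [Semiring R] (hq0 : 0 < q) {m : ℕ} (u : Fin m → R) :
    (qPolyOfFn q u).natDegree ≤ q ^ (m - 1) :=
  natDegree_sum_le_of_forall_le _ _ fun k _ => (natDegree_C_mul_X_pow_le _ _).trans
    (Nat.pow_le_pow_right hq0 (Nat.le_sub_one_of_lt k.isLt))

theorem exists_isqPoly_coeff_X_add_comp_eq_zero [Field R] [Finite R] [ExpChar R p]
    (hq : q = p ^ e) (h1q : 1 < q) {m : ℕ} (hm : 0 < m) {g : R[X]} (hg : g.coeff 1 ≠ 0) :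
    ∃ U : R[X], IsqPoly q U ∧ U.natDegree ≤ q ^ (m - 1) ∧
      ∀ k < m, (X + U.comp g).coeff (q ^ k) = 0 := by
  have hdeg (u : Fin m → R) : (qPolyOfFn q u).natDegree < q ^ m :=
    (natDegree_qPolyOfFn_le (by omega) u).trans_lt (Nat.pow_lt_pow_right h1q (by omega))
  set φ : (Fin m → R) → (Fin m → R) := fun u k => ((qPolyOfFn q u).comp g).coeff (q ^ (k : ℕ))
  have hφ : Function.Injective φ := by
    intro u u' huu'
    have h0 : qPolyOfFn q u - qPolyOfFn q u' = 0 :=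
      ((isqPoly_qPolyOfFn u).sub_s2 (isqPoly_qPolyOfFn u')).eq_zero_of_coeff_comp_eq_zero hq h1q
        ((natDegree_sub_le _ _).trans_lt (max_lt (hdeg u) (hdeg u'))) hg fun k hk => by
          rw [sub_comp, coeff_sub, sub_eq_zero]
          exact congrFun huu' ⟨k, hk⟩
    funext k
    rw [← coeff_qPolyOfFn_q_pow h1q u k, ← coeff_qPolyOfFn_q_pow h1q u' k, sub_eq_zero.mp h0]
  obtain ⟨u, hu⟩ :=
    Finite.injective_iff_surjective.mp hφ fun k => -(X : R[X]).coeff (q ^ (k : ℕ))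
  refine ⟨qPolyOfFn q u, isqPoly_qPolyOfFn u, natDegree_qPolyOfFn_le (by omega) u, fun k hk => ?_⟩
  have hUk : ((qPolyOfFn q u).comp g).coeff (q ^ k) = -(X : R[X]).coeff (q ^ k) :=
    congrFun hu ⟨k, hk⟩
  rw [coeff_add, hUk, add_neg_cancel]

theorem exists_pow_q_pow_eq [CommSemiring R] [ExpChar R p] [PerfectRing R p] (hq : q = p ^ e)
    {m : ℕ} {P : R[X]} (hP : ∀ j, ¬ q ^ m ∣ j → P.coeff j = 0) : ∃ Q : R[X], Q ^ q ^ m = P := by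
  subst hq
  rw [← pow_mul] at hP ⊢
  refine ⟨map (iterateFrobeniusEquiv R p (e * m)).symm (contract (p ^ (e * m)) P), ?_⟩
  ext j
  rw [← map_iterateFrobenius_expand, coeff_map, coeff_expand (expChar_pow_pos R p _)]
  split_ifs with hj
  · rw [coeff_map, coeff_contract (expChar_pow_pos R p _).ne', Nat.div_mul_cancel hj,
      ← coe_iterateFrobeniusEquiv]
    exact RingEquiv.apply_symm_apply _ _
  · rw [map_zero, hP j hj]

end Existence

section MainResult

variable {R : Type*} {p e q : ℕ}

theorem IsqPoly.one_lt_natDegree_comp [Semiring R] [NoZeroDivisors R] (hq0 : 0 < q)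
    {U g : R[X]} (hU : IsqPoly q U) (hU0 : U ≠ 0) (hg : 2 ≤ g.natDegree) :
    1 < (U.comp g).natDegree := by
  obtain ⟨u, hu⟩ := hU.exists_natDegree_eq_pow hU0
  rw [natDegree_comp, hu]
  exact hg.trans_lt' one_lt_two |>.trans_le (Nat.le_mul_of_pos_left _ (pow_pos hq0 u))

theorem natDegree_le_of_pow_q_pow_eq_X_add_comp [Semiring R] [NoZeroDivisors R] (hq0 : 0 < q)
    {m s : ℕ} (hm : 0 < m) {Q U g : R[X]} (hQU : Q ^ q ^ m = X + U.comp g)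
    (hU : U.natDegree ≤ q ^ (m - 1)) (hg : g.natDegree = q ^ s) : Q.natDegree ≤ q ^ (s - 1) := by
  refine Nat.le_of_mul_le_mul_left ?_ (pow_pos hq0 m)
  calc q ^ m * Q.natDegree = (X + U.comp g).natDegree := by rw [← natDegree_pow, hQU]
    _ ≤ max 1 (U.natDegree * g.natDegree) := natDegree_add_le_of_degree_le
      (natDegree_X_le.trans (le_max_left _ _)) (natDegree_comp.le.trans (le_max_right _ _))
    _ ≤ q ^ (m - 1) * q ^ s := max_le (Nat.one_le_iff_ne_zero.mpr (by positivity))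
      (hg ▸ Nat.mul_le_mul_right _ hU)
    _ ≤ q ^ m * q ^ (s - 1) := by
      rw [← pow_add, ← pow_add]
      exact Nat.pow_le_pow_right hq0 (by omega)

theorem existsUnique_pow_q_pow_eq_X_add_comp [Field R] [Finite R] [ExpChar R p]
    (hq : q = p ^ e) (h1q : 1 < q) {m : ℕ} (hm : 0 < m) {g : R[X]} (hg : IsqPoly q g)
    (hg1 : g.coeff 1 ≠ 0) (hg2 : 2 ≤ g.natDegree) :
    ∃! QU : R[X] × R[X], QU.1 ≠ 0 ∧ QU.2 ≠ 0 ∧ IsqPoly q QU.1 ∧ IsqPoly q QU.2 ∧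
      QU.2.natDegree ≤ q ^ (m - 1) ∧ QU.1 ^ q ^ m = X + QU.2.comp g := by
  obtain ⟨U, hU, hUdeg, hcoeff⟩ := exists_isqPoly_coeff_X_add_comp_eq_zero hq h1q hm hg1
  have hP : IsqPoly q (X + U.comp g) := IsqPoly.X.add_s2 (hU.comp hq hg)
  obtain ⟨Q, hQ⟩ := exists_pow_q_pow_eq hq (P := X + U.comp g) (m := m) fun j hj => by
    by_contra hj0
    obtain ⟨t, rfl⟩ := hP j (mem_support_iff.mpr hj0)
    rcases lt_or_ge t m with ht | ht
    · exact hj0 (hcoeff t ht)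
    · exact hj (pow_dvd_pow q ht)
  have hU0 : U ≠ 0 := by
    rintro rfl
    simpa using hcoeff 0 hm
  have hQ0 : Q ≠ 0 := by
    rintro rfl
    have hdeg := hU.one_lt_natDegree_comp (by omega) hU0 hg2
    refine ne_zero_of_natDegree_gt (n := 1) ?_ (hQ.symm.trans (zero_pow (by positivity)))
    rwa [natDegree_add_eq_right_of_natDegree_lt (natDegree_X_le.trans_lt hdeg)]
  have hdeg_lt {V : R[X]} (hV : V.natDegree ≤ q ^ (m - 1)) : V.natDegree < q ^ m :=
    hV.trans_lt (Nat.pow_lt_pow_right h1q (by omega))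
  refine ⟨(Q, U), ⟨hQ0, hU0, (hQ ▸ hP).of_pow_q_pow hq, hU, hUdeg, hQ⟩, ?_⟩
  rintro ⟨Q', U'⟩ ⟨-, -, -, hU', hU'deg, hQ'⟩
  obtain ⟨rfl, rfl⟩ := eq_of_pow_q_pow_eq_X_add_comp hq h1q hg1 hU' hU (hdeg_lt hU'deg)
    (hdeg_lt hUdeg) hQ' hQ
  rfl

end MainResult

section MonicqPoly

variable {R : Type*} [Semiring R] {q : ℕ} (a : ℕ → R) (s : ℕ)

theorem isqPoly_X_pow_add_sum :
    IsqPoly q (X ^ q ^ s + ∑ i ∈ Finset.range s, C (a i) * X ^ q ^ i) :=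
  (IsqPoly.X_pow_q_pow s).add_s2 (IsqPoly.sum _ fun i _ => (IsqPoly.X_pow_q_pow i).C_mul_s2 _)

theorem coeff_one_X_pow_add_sum (h1q : 1 < q) {s : ℕ} (hs : 0 < s) :
    (X ^ q ^ s + ∑ i ∈ Finset.range s, C (a i) * X ^ q ^ i).coeff 1 = a 0 := by
  have hpow {i : ℕ} : 1 = q ^ i ↔ i = 0 := by
    rw [eq_comm, Nat.pow_eq_one]
    omega
  simp [coeff_X_pow, hpow, hs.ne']

theorem natDegree_X_pow_add_sum [Nontrivial R] (h1q : 1 < q) :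
    (X ^ q ^ s + ∑ i ∈ Finset.range s, C (a i) * X ^ q ^ i).natDegree = q ^ s := by
  refine natDegree_add_eq_left_of_degree_lt ?_ |>.trans (natDegree_X_pow _)
  rw [degree_X_pow]
  refine (degree_sum_le _ _).trans_lt
    ((Finset.sup_lt_iff (WithBot.bot_lt_coe _)).mpr fun i hi => ?_)
  exact (degree_C_mul_X_pow_le _ _).trans_lt
    (WithBot.coe_lt_coe.mpr (Nat.pow_lt_pow_right h1q (Finset.mem_range.mp hi)))

end MonicqPoly

theorem propchave_exists_unique_Q_U_general
    (p q e n r s : ℕ) (hp : p.Prime) (he : 0 < e) (hq : q = p ^ e)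
    (hn : 2 ≤ n) (hr2 : r ≤ n - 1)
    (hs : 1 ≤ s)
    (F : Type*) [Field F] [Fintype F] (hF : Fintype.card F = q ^ n)
    (a : ℕ → F) (ha : a 0 ≠ 0)
    (gs : Polynomial F)
    (hgs : gs = X ^ q ^ s + ∑ i ∈ Finset.range s, C (a i) * X ^ q ^ i) :
    (∃! QU : Polynomial F × Polynomial F,
        QU.1 ≠ 0 ∧ QU.2 ≠ 0 ∧ IsqPoly q QU.1 ∧ IsqPoly q QU.2 ∧
        QU.2.natDegree ≤ q ^ (n - r - 1) ∧
        QU.1 ^ q ^ (n - r) = X + QU.2.comp gs) ∧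
    (∀ Q U : Polynomial F, Q ≠ 0 → U ≠ 0 → IsqPoly q Q → IsqPoly q U →
        U.natDegree ≤ q ^ (n - r - 1) →
        Q ^ q ^ (n - r) = X + U.comp gs →
        (∃ u : ℕ, u ≤ n - r - 1 ∧ U.natDegree = q ^ u) ∧ Q.natDegree ≤ q ^ (s - 1)) := by
  have : Fact p.Prime := ⟨hp⟩
  have : CharP F p := charP_of_card_eq_prime_pow (hF.trans (by rw [hq, ← pow_mul]))
  have h1q : 1 < q := hq ▸ Nat.one_lt_pow he.ne' hp.one_lt
  have hm : 0 < n - r := by omega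
  have hgdeg : gs.natDegree = q ^ s := hgs ▸ natDegree_X_pow_add_sum a s h1q
  have hg2 : 2 ≤ gs.natDegree := hgdeg ▸ h1q.trans_le (Nat.le_self_pow (by omega) q)
  refine ⟨existsUnique_pow_q_pow_eq_X_add_comp hq h1q hm (hgs ▸ isqPoly_X_pow_add_sum a s)
    (hgs ▸ coeff_one_X_pow_add_sum a h1q hs ▸ ha) hg2, ?_⟩
  intro Q U _ hU0 _ hU hUdeg hQU
  obtain ⟨u, hu⟩ := hU.exists_natDegree_eq_pow hU0
  exact ⟨⟨u, (Nat.pow_le_pow_iff_right h1q).mp (hu ▸ hUdeg), hu⟩,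
    natDegree_le_of_pow_q_pow_eq_X_add_comp (by omega) hm hQU hUdeg hgdeg⟩

/-- Proposition 2.11 (`propchave`), existence/uniqueness part: for a separable monic
`q`-polynomial `g_s` of degree `q^s` that splits over `F_{q^n}`, there is a unique pair of
nonzero `q`-polynomials `(Q, U)` with `deg U ≤ q^{n-r-1}` and
`Q(y)^{q^{n-r}} = y + U(g_s(y))`; moreover for any such pair `deg U` is a power `q^u` of `q`
with `u ≤ n-r-1` and `deg Q ≤ q^{s-1}`. -/
theorem propchave_exists_unique_Q_U
    (p q e n r s : ℕ) (hp : p.Prime) (he : 0 < e) (hq : q = p ^ e)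
    (hn : 2 ≤ n) (hr1 : n ≤ 2 * r) (hr2 : r ≤ n - 1) (hgcd : Nat.gcd n r = 1)
    (hs : 1 ≤ s)
    (F : Type*) [Field F] [Fintype F] (hF : Fintype.card F = q ^ n)
    (a : ℕ → F) (ha : a 0 ≠ 0)
    (gs : Polynomial F)
    (hgs : gs = X ^ q ^ s + ∑ i ∈ Finset.range s, C (a i) * X ^ q ^ i)
    (hsplit : Splits (gs.map (RingHom.id F))) :
    (∃! QU : Polynomial F × Polynomial F,
        QU.1 ≠ 0 ∧ QU.2 ≠ 0 ∧ IsqPoly q QU.1 ∧ IsqPoly q QU.2 ∧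
        QU.2.natDegree ≤ q ^ (n - r - 1) ∧
        QU.1 ^ q ^ (n - r) = X + QU.2.comp gs) ∧
    (∀ Q U : Polynomial F, Q ≠ 0 → U ≠ 0 → IsqPoly q Q → IsqPoly q U →
        U.natDegree ≤ q ^ (n - r - 1) →
        Q ^ q ^ (n - r) = X + U.comp gs →
        (∃ u : ℕ, u ≤ n - r - 1 ∧ U.natDegree = q ^ u) ∧ Q.natDegree ≤ q ^ (s - 1)) :=
  propchave_exists_unique_Q_U_general p q e n r s hp he hq hn hr2 hs F hF a ha gs hgs
end

section
/- Let q be a power of a prime p, let n ≥ 2, let r be an integer with ⌈n/2⌉ ≤ r ≤ n-1 and gcd(n,r) = 1, and let g_s(y) = y^{q^s} + a_{s-1} y^{q^{s-1}} + ... + a_0 y ∈ F_{q^n}[y] be a separable q-polynomial (a_0 ≠ 0) that splits into linear factors over F_{q^n}, with s ≥ r + 1. If Q(y), U(y) ∈ F_{q^n}[y] are nonzero q-polynomials with deg(U) ≤ q^{n-r-1} satisfying Q(y)^{q^{n-r}} = y + U(g_s(y)), then Q(y) = y^{q^r} and deg(U(y)) = q^{n-s}; in particular y^{q^n} - y = U(g_s(y))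 for a q-polynomial U of degree q^{n-s}. -/
/-!
At each of the `q ^ s` distinct roots `w ∈ F` of the separable split polynomial `g_s`, the identity
gives `Q(w) ^ q ^ (n - r) = w + U(0) = w`; raising to the power `q ^ r` and using `x ^ q ^ n = x`
on `F` yields `Q(w) = w ^ q ^ r`. Comparing degrees in the identity bounds `deg Q ≤ q ^ (s - 1)`,
so `Q - X ^ q ^ r` has more roots than its degree and vanishes. Then
`X ^ q ^ n - X = U(g_s)`, and comparing degrees once more gives `deg U = q ^ (n - s)`.
-/

open Polynomial

theorem IsqPoly.coeff_zero_eq_zero {q : ℕ} {R : Type*} [Semiring R] {f : R[X]}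
    (hf : IsqPoly q f) (hq : q ≠ 0) : f.coeff 0 = 0 := by
  by_contra h
  obtain ⟨k, hk⟩ := hf 0 (mem_support_iff.mpr h)
  exact pow_ne_zero k hq hk.symm

theorem eq_pow_sub_of_pow_eq_mul_pow {q n s m : ℕ} (hq : 1 < q) (h : q ^ n = m * q ^ s) :
    m = q ^ (n - s) := by
  have hsn : s ≤ n := (Nat.pow_dvd_pow_iff_le_right hq).mp ⟨m, h.trans (mul_comm _ _)⟩
  apply Nat.eq_of_mul_eq_mul_right (pow_pos (zero_lt_one.trans hq) s)
  rw [← h, ← pow_add, Nat.sub_add_cancel hsn]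

namespace FiniteField

variable {K : Type*} {q n : ℕ}

theorem one_lt_and_ne_zero_of_card_eq_pow [Fintype K] [Nontrivial K]
    (hK : Fintype.card K = q ^ n) : 1 < q ∧ n ≠ 0 := by
  have hcard : 1 < q ^ n := hK ▸ Fintype.one_lt_card
  have hn : n ≠ 0 := by
    rintro rfl
    simp at hcard
  exact ⟨(Nat.one_lt_pow_iff hn).mp hcard, hn⟩

theorem cast_eq_zero_of_card_eq_pow [Field K] [Fintype K] (hK : Fintype.card K = q ^ n) :
    (q : K) = 0 :=
  eq_zero_of_pow_eq_zero (n := n) (by rw [← Nat.cast_pow, ← hK, cast_card_eq_zero])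

theorem eq_pow_of_pow_eq [GroupWithZero K] [Fintype K] (hK : Fintype.card K = q ^ n) {r : ℕ}
    (hr : r ≤ n) {x w : K} (h : x ^ q ^ (n - r) = w) : x = w ^ q ^ r := by
  rw [← h, ← pow_mul, ← pow_add, Nat.sub_add_cancel hr, ← hK, pow_card]

end FiniteField

noncomputable def monicqPoly {R : Type*} [Semiring R] (q s : ℕ) (a : ℕ → R) : R[X] :=
  X ^ q ^ s + ∑ i ∈ Finset.range s, C (a i) * X ^ q ^ i

section monicqPoly

variable {R : Type*} {q s : ℕ} (a : ℕ → R)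

theorem natDegree_monicqPoly [Semiring R] [Nontrivial R] (hq : 1 < q) :
    (monicqPoly q s a).natDegree = q ^ s := by
  have hlow : (∑ i ∈ Finset.range s, C (a i) * X ^ q ^ i).degree < ((q ^ s : ℕ) : WithBot ℕ) := by
    refine (degree_sum_le _ _).trans_lt
      ((Finset.sup_lt_iff (WithBot.bot_lt_coe _)).mpr fun i hi ↦ ?_)
    exact (degree_C_mul_X_pow_le _ _).trans_lt
      (WithBot.coe_lt_coe.mpr (Nat.pow_lt_pow_right hq (Finset.mem_range.mp hi)))
  rw [monicqPoly, natDegree_add_eq_left_of_degree_lt (by rwa [degree_X_pow]), natDegree_X_pow]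

theorem derivative_monicqPoly [CommSemiring R] (hqR : (q : R) = 0) (hs : s ≠ 0) :
    derivative (monicqPoly q s a) = C (a 0) := by
  have hpow : ∀ i ≠ 0, ((q ^ i : ℕ) : R) = 0 := fun i hi ↦ by
    rw [Nat.cast_pow, hqR, zero_pow hi]
  rw [monicqPoly, derivative_add, derivative_sum, derivative_X_pow, hpow s hs, C_0, zero_mul,
    zero_add, Finset.sum_eq_single_of_mem 0 (Finset.mem_range.mpr (Nat.pos_of_ne_zero hs))]
  · simp
  · intro i _ hi
    rw [derivative_C_mul_X_pow, hpow i hi]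
    simp

theorem separable_monicqPoly [CommSemiring R] (hqR : (q : R) = 0) (hs : s ≠ 0)
    (ha : IsUnit (a 0)) : (monicqPoly q s a).Separable := by
  rw [separable_def, derivative_monicqPoly a hqR hs]
  exact isCoprime_one_right.of_isCoprime_of_dvd_right (isUnit_C.mpr ha).dvd

end monicqPoly

theorem card_roots_toFinset_of_separable_of_splits {F : Type*} [Field F] [DecidableEq F]
    {g : F[X]} (hsep : g.Separable) (hsplit : g.Splits) :
    g.roots.toFinset.card = g.natDegree := by
  rw [Multiset.toFinset_card_of_nodup (nodup_roots hsep), hsplit.natDegree_eq_card_roots]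

theorem natDegree_le_of_pow_eq_add_comp {K : Type*} [Semiring K] [NoZeroDivisors K]
    {q n r s : ℕ} {g Q U : K[X]} (hq : 0 < q)
    (hr : r < n) (hg : g.natDegree ≤ q ^ s) (hU : U.natDegree ≤ q ^ (n - r - 1))
    (heq : Q ^ q ^ (n - r) = X + U.comp g) : Q.natDegree ≤ q ^ (s - 1) := by
  have hQpow : q ^ (n - r) * Q.natDegree ≤ q ^ (n - r) * q ^ (s - 1) := calc
    q ^ (n - r) * Q.natDegree = (X + U.comp g).natDegree := by rw [← heq, natDegree_pow]
    _ ≤ max 1 (U.natDegree * g.natDegree) :=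
      (natDegree_add_le _ _).trans (max_le_max natDegree_X_le natDegree_comp_le)
    _ ≤ q ^ (n - r - 1) * q ^ s :=
      max_le (Nat.one_le_iff_ne_zero.mpr (by positivity)) (Nat.mul_le_mul hU hg)
    _ ≤ q ^ (n - r) * q ^ (s - 1) := by
      rw [← pow_add, ← pow_add]
      exact Nat.pow_le_pow_right hq (by omega)
  exact Nat.le_of_mul_le_mul_left hQpow (by positivity)

theorem eval_eq_pow_of_pow_eq_add_comp {K : Type*} [Field K] [Fintype K] {q n r : ℕ}
    {g Q U : K[X]} (hK : Fintype.card K = q ^ n)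
    (hr : r ≤ n) (hq : q ≠ 0) (hU : IsqPoly q U) (heq : Q ^ q ^ (n - r) = X + U.comp g)
    {w : K} (hw : g.IsRoot w) : Q.eval w = w ^ q ^ r := by
  refine FiniteField.eq_pow_of_pow_eq hK hr ?_
  simpa [hw.eq_zero, ← coeff_zero_eq_eval_zero, hU.coeff_zero_eq_zero hq] using
    congrArg (eval w) heq

theorem propchave_case_s_ge_r_add_one_general
    (q n r s : ℕ) (hr2 : r ≤ n - 1)
    (hs : r + 1 ≤ s)
    (F : Type*) [Field F] [Fintype F] (hF : Fintype.card F = q ^ n)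
    (a : ℕ → F) (ha : a 0 ≠ 0)
    (gs : Polynomial F)
    (hgs : gs = X ^ q ^ s + ∑ i ∈ Finset.range s, C (a i) * X ^ q ^ i)
    (hsplit : Splits gs)
    (Q U : Polynomial F)
    (hUq : IsqPoly q U)
    (hUdeg : U.natDegree ≤ q ^ (n - r - 1))
    (heq : Q ^ q ^ (n - r) = X + U.comp gs) :
    Q = X ^ q ^ r ∧ U.natDegree = q ^ (n - s) ∧
      X ^ q ^ n - X = U.comp gs := by
  classical
  obtain ⟨hq, hn⟩ := FiniteField.one_lt_and_ne_zero_of_card_eq_pow hF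
  have hdeg : gs.natDegree = q ^ s := hgs ▸ natDegree_monicqPoly a hq
  have hsep : gs.Separable := hgs ▸ separable_monicqPoly a
    (FiniteField.cast_eq_zero_of_card_eq_pow hF) (by omega) ha.isUnit
  have hQ : Q = X ^ q ^ r := by
    refine eq_of_natDegree_lt_card_of_eval_eq' Q _ gs.roots.toFinset (fun w hw ↦ ?_) ?_
    · rw [eval_X_pow]
      exact eval_eq_pow_of_pow_eq_add_comp hF (by omega) (by omega) hUq heq
        (isRoot_of_mem_roots (Multiset.mem_toFinset.mp hw))
    · have hQdeg := natDegree_le_of_pow_eq_add_comp (by omega) (by omega) hdeg.le hUdeg heq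
      rw [card_roots_toFinset_of_separable_of_splits hsep hsplit, hdeg, natDegree_X_pow]
      exact max_lt (hQdeg.trans_lt (Nat.pow_lt_pow_right hq (by omega)))
        (Nat.pow_lt_pow_right hq (by omega))
  have hcomp : X ^ q ^ n - X = U.comp gs := by
    rw [eq_sub_of_add_eq' heq.symm, hQ, ← pow_mul, ← pow_add, Nat.add_sub_cancel' (by omega)]
  refine ⟨hQ, eq_pow_sub_of_pow_eq_mul_pow hq ?_, hcomp⟩
  rw [← hdeg, ← natDegree_comp, ← hcomp, FiniteField.X_pow_card_sub_X_natDegree_eq F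
    (Nat.one_lt_pow hn hq)]

/-- Proposition 2.11 (`propchave`), case `s ≥ r + 1`: any nonzero `q`-polynomials `Q, U` with
`deg U ≤ q^{n-r-1}` and `Q(y)^{q^{n-r}} = y + U(g_s(y))` satisfy `Q(y) = y^{q^r}` and
`deg U = q^{n-s}`; in particular `y^{q^n} - y = U(g_s(y))`. -/
theorem propchave_case_s_ge_r_add_one
    (p q e n r s : ℕ) (hp : p.Prime) (he : 0 < e) (hq : q = p ^ e)
    (hn : 2 ≤ n) (hr1 : n ≤ 2 * r) (hr2 : r ≤ n - 1) (hgcd : Nat.gcd n r = 1)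
    (hs : r + 1 ≤ s)
    (F : Type*) [Field F] [Fintype F] (hF : Fintype.card F = q ^ n)
    (a : ℕ → F) (ha : a 0 ≠ 0)
    (gs : Polynomial F)
    (hgs : gs = X ^ q ^ s + ∑ i ∈ Finset.range s, C (a i) * X ^ q ^ i)
    (hsplit : Splits gs)
    (Q U : Polynomial F) (hQ0 : Q ≠ 0) (hU0 : U ≠ 0)
    (hQq : IsqPoly q Q) (hUq : IsqPoly q U)
    (hUdeg : U.natDegree ≤ q ^ (n - r - 1))
    (heq : Q ^ q ^ (n - r) = X + U.comp gs) :
    Q = X ^ q ^ r ∧ U.natDegree = q ^ (n - s) ∧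
      X ^ q ^ n - X = U.comp gs :=
  propchave_case_s_ge_r_add_one_general q n r s hr2 hs F hF a ha gs hgs hsplit Q U hUq hUdeg heq
end

section
/- Let (a_1, ..., a_m) be a telescopic sequence of positive integers (so gcd(a_1,...,a_m) = 1) and let S_m be the numerical semigroup it generates. If S_m ≠ ℕ, then the largest gap of S_m satisfies l_g(S_m) = Σ_{i=1}^{m} (d_{i-1}/d_i - 1) a_i, where d_i = gcd(a_1, ..., a_i) for i ≥ 1, d_0 = 0, and the i = 1 term of the sum equals -a_1. -/
/-!
Write `d = d_i / d_{i+1}` and `A = a_{i+1} / d_{i+1}`. Then `S_{i+1} = d • S_i + ℕ A` with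
`gcd(A, d) = 1`, and the telescopic condition says `A ∈ S_i`. For such a gluing, if `F` is the
largest gap of `S_i`, the largest gap of `S_{i+1}` is `d F + (d - 1) A`: every `n` can be
written as `k A + d s` with `0 ≤ k < d`, and `n` lies in `S_{i+1}` exactly when `s ∈ S_i`.
Multiplying by `d_{i+1}` turns this recursion into the telescoping sum, starting from `S_1 = ℕ`
with largest gap `-1`.
-/

/-- `seqGcd a i = d_i = gcd(a_1, …, a_i)` (so `seqGcd a 0 = 0`). -/
def seqGcd (a : ℕ → ℕ) (i : ℕ) : ℕ := Finset.gcd (Finset.Icc 1 i) a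

/-- `seqSemigroup a i = S_i`, the submonoid of `ℕ` generated by `{a_1/d_i, …, a_i/d_i}`. -/
def seqSemigroup (a : ℕ → ℕ) (i : ℕ) : AddSubmonoid ℕ :=
  AddSubmonoid.closure ((fun j => a j / seqGcd a i) '' Set.Icc 1 i)

theorem Nat.div_eq_div_mul_div_of_dvd {x y z : ℕ} (hzy : z ∣ y) (hyx : y ∣ x) :
    x / z = y / z * (x / y) := by
  obtain ⟨u, rfl⟩ := hzy
  obtain ⟨v, rfl⟩ := hyx
  rcases Nat.eq_zero_or_pos z with rfl | hz
  · simp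
  rcases Nat.eq_zero_or_pos u with rfl | hu
  · simp
  rw [Nat.mul_div_cancel_left _ hz, Nat.mul_div_cancel_left _ (Nat.mul_pos hz hu), mul_assoc,
    Nat.mul_div_cancel_left _ hz]

/-- The largest gap `F` of a submonoid of `ℕ`, with the convention `F = -1` for `S = ⊤`. -/
structure IsFrobeniusNumber (S : AddSubmonoid ℕ) (F : ℤ) : Prop where
  neg_one_le : -1 ≤ F
  mem_of_lt : ∀ n : ℕ, F < n → n ∈ S
  notMem : ∀ n : ℕ, (n : ℤ) = F → n ∉ S

namespace IsFrobeniusNumber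

variable {S T : AddSubmonoid ℕ} {F : ℤ} {d A : ℕ}

theorem top : IsFrobeniusNumber ⊤ (-1) :=
  ⟨le_rfl, fun _ _ => AddSubmonoid.mem_top _, fun n hn => by omega⟩

theorem exists_isGreatest (hS : IsFrobeniusNumber S F) (hne : S ≠ ⊤) :
    ∃ l : ℕ, IsGreatest {x : ℕ | x ∉ S} l ∧ (l : ℤ) = F := by
  obtain ⟨x, hx⟩ : ∃ x : ℕ, x ∉ S := by
    by_contra! h
    exact hne ((AddSubmonoid.eq_top_iff' S).2 h)
  have hxF : (x : ℤ) ≤ F := not_lt.1 fun h => hx (hS.mem_of_lt x h)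
  lift F to ℕ using (Nat.cast_nonneg x).trans hxF with l
  refine ⟨l, ⟨hS.notMem l rfl, fun y hy => not_lt.1 fun h => hy (hS.mem_of_lt y ?_)⟩, rfl⟩
  exact_mod_cast h

theorem mem_map_mulLeft_sup_closure_singleton {n : ℕ} :
    n ∈ T.map (AddMonoidHom.mulLeft d) ⊔ AddSubmonoid.closure {A} ↔
      ∃ s ∈ T, ∃ k : ℕ, d * s + k * A = n := by
  simp [AddSubmonoid.mem_sup, AddSubmonoid.mem_closure_singleton]

theorem map_mulLeft_sup (hT : IsFrobeniusNumber T F) (hd : 0 < d) (hAd : A.Coprime d)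
    (hA : A ∈ T) :
    IsFrobeniusNumber (T.map (AddMonoidHom.mulLeft d) ⊔ AddSubmonoid.closure {A})
      (d * F + (d - 1) * A) where
  neg_one_le := by
    have hF := hT.neg_one_le
    rcases Nat.eq_zero_or_pos A with rfl | hA0
    · obtain rfl : d = 1 := (Nat.coprime_zero_left d).1 hAd
      simpa using hF
    · have hdZ : (1 : ℤ) ≤ d := by exact_mod_cast hd
      have hAZ : (1 : ℤ) ≤ A := by exact_mod_cast hA0
      nlinarith
  mem_of_lt n hn := by
    obtain ⟨k, hkd, hk⟩ := Nat.exists_mul_mod_eq_of_coprime n hAd hd.ne'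
    obtain ⟨s, hs⟩ : (d : ℤ) ∣ n - A * k := Nat.modEq_iff_dvd.1 hk
    have hkA : (k : ℤ) * A ≤ (d - 1) * A := by gcongr; omega
    have hFs : F < s := by
      have : (d : ℤ) * F < d * s := by linarith
      exact lt_of_mul_lt_mul_left this (by positivity)
    lift s to ℕ using by linarith [hT.neg_one_le]
    exact mem_map_mulLeft_sup_closure_singleton.2
      ⟨s, hT.mem_of_lt s hFs, k, by zify; linarith⟩
  notMem n hn hmem := by
    obtain ⟨s, hs, k, rfl⟩ := mem_map_mulLeft_sup_closure_singleton.1 hmem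
    push_cast at hn
    -- `d ∣ (k + 1) * A`, so `k + 1 = d (t + 1)` and then `F = s + t A ∈ T`.
    have hdvd : d ∣ (k + 1) * A := by
      have : (d : ℤ) ∣ (k + 1) * A := ⟨F + A - s, by linear_combination hn⟩
      exact_mod_cast this
    obtain ⟨t, ht⟩ := hAd.symm.dvd_of_dvd_mul_right hdvd
    obtain ⟨t, rfl⟩ : ∃ t', t = t' + 1 :=
      Nat.exists_eq_add_one.2 (Nat.pos_of_ne_zero (by rintro rfl; simp at ht))
    refine hT.notMem (s + t * A) ?_ (add_mem hs (AddSubmonoid.nsmul_mem T hA t))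
    have htZ : (k : ℤ) + 1 = d * (t + 1) := by exact_mod_cast ht
    have hd0 : (d : ℤ) ≠ 0 := by exact_mod_cast hd.ne'
    apply mul_left_cancel₀ hd0
    push_cast
    linear_combination hn - A * htZ

end IsFrobeniusNumber

section seqGcd

variable (a : ℕ → ℕ)

@[simp]
theorem seqGcd_zero : seqGcd a 0 = 0 := by simp [seqGcd]

theorem seqGcd_succ (i : ℕ) : seqGcd a (i + 1) = Nat.gcd (a (i + 1)) (seqGcd a i) := by
  rw [seqGcd, ← Finset.insert_Icc_right_eq_Icc_add_one (by omega), Finset.gcd_insert]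
  rfl

@[simp]
theorem seqGcd_one : seqGcd a 1 = a 1 := by simp [seqGcd_succ]

theorem seqGcd_dvd {i j : ℕ} (hj : 1 ≤ j) (hji : j ≤ i) : seqGcd a i ∣ a j :=
  Finset.gcd_dvd (Finset.mem_Icc.2 ⟨hj, hji⟩)

theorem seqGcd_succ_dvd (i : ℕ) : seqGcd a (i + 1) ∣ seqGcd a i := by
  rw [seqGcd_succ]
  exact Nat.gcd_dvd_right _ _

theorem seqGcd_pos {i : ℕ} (ha : 0 < a 1) (hi : 1 ≤ i) : 0 < seqGcd a i :=
  Nat.pos_of_dvd_of_pos (seqGcd_dvd a le_rfl hi) ha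

end seqGcd

theorem seqSemigroup_one {a : ℕ → ℕ} (ha : 0 < a 1) : seqSemigroup a 1 = ⊤ := by
  simp [seqSemigroup, Nat.div_self ha, Nat.addSubmonoidClosure_one]

theorem seqSemigroup_succ (a : ℕ → ℕ) (i : ℕ) :
    seqSemigroup a (i + 1) =
      (seqSemigroup a i).map (AddMonoidHom.mulLeft (seqGcd a i / seqGcd a (i + 1))) ⊔
        AddSubmonoid.closure {a (i + 1) / seqGcd a (i + 1)} := by
  rw [seqSemigroup, seqSemigroup, AddMonoidHom.map_mclosure,
    ← Set.insert_Icc_right_eq_Icc_add_one (by omega : 1 ≤ i + 1), Set.image_insert_eq,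
    Set.insert_eq, AddSubmonoid.closure_union, sup_comm, Set.image_image]
  congr 2
  refine Set.image_congr fun j hj => ?_
  exact Nat.div_eq_div_mul_div_of_dvd (seqGcd_succ_dvd a i) (seqGcd_dvd a hj.1 hj.2)

theorem exists_isFrobeniusNumber_seqSemigroup {a : ℕ → ℕ} {m : ℕ} (ha : 0 < a 1)
    (htel : ∀ i, 2 ≤ i → i ≤ m → a i / seqGcd a i ∈ seqSemigroup a (i - 1))
    {i : ℕ} (hi : 1 ≤ i) (him : i ≤ m) :
    ∃ F, IsFrobeniusNumber (seqSemigroup a i) F ∧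
      (seqGcd a i : ℤ) * F = ∑ j ∈ Finset.Icc 1 i,
        ((seqGcd a (j - 1) : ℤ) / (seqGcd a j : ℤ) - 1) * (a j : ℤ) := by
  induction i, hi using Nat.le_induction with
  | base => exact ⟨-1, seqSemigroup_one ha ▸ .top, by simp⟩
  | succ i hi ih =>
    obtain ⟨F, hF, hsum⟩ := ih (by omega)
    set e := seqGcd a i / seqGcd a (i + 1)
    set A := a (i + 1) / seqGcd a (i + 1)
    have hd := seqGcd_pos a ha hi
    have hd' := seqGcd_pos a ha (by omega : 1 ≤ i + 1)
    have he : 0 < e := Nat.div_pos (Nat.le_of_dvd hd (seqGcd_succ_dvd a i)) hd'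
    have hAe : A.Coprime e := by
      simp only [A, e, seqGcd_succ] at hd' ⊢
      exact Nat.coprime_div_gcd_div_gcd hd'
    have hA : A ∈ seqSemigroup a i := by simpa using htel (i + 1) (by omega) him
    refine ⟨e * F + (e - 1) * A, seqSemigroup_succ a i ▸ hF.map_mulLeft_sup he hAe hA, ?_⟩
    have hde : (seqGcd a i : ℤ) = seqGcd a (i + 1) * e := by
      exact_mod_cast (Nat.mul_div_cancel' (seqGcd_succ_dvd a i)).symm
    have haA : (a (i + 1) : ℤ) = seqGcd a (i + 1) * A := by
      exact_mod_cast (Nat.mul_div_cancel' (seqGcd_dvd a (by omega) le_rfl)).symm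
    have hdiv : (seqGcd a i : ℤ) / seqGcd a (i + 1) = e := by
      rw [hde, Int.mul_ediv_cancel_left _ (by exact_mod_cast hd'.ne')]
    rw [Finset.sum_Icc_succ_top (by omega), ← hsum, Nat.add_sub_cancel, hdiv, hde, haA]
    ring

/-- Lemma 2.2 (Kirfel–Pellikaan, Lemma 6.5), largest-gap part: for a telescopic sequence
`(a_1, …, a_m)` generating `S_m ≠ ℕ`, the largest gap of `S_m` is
`Σ_{i=1}^m (d_{i-1}/d_i - 1)·a_i` (with the `i = 1` term equal to `-a_1`). -/
theorem telescopic_largest_gap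
    (m : ℕ) (hm : 1 ≤ m) (a : ℕ → ℕ)
    (hpos : ∀ i, 1 ≤ i → i ≤ m → 0 < a i)
    (hgcd : seqGcd a m = 1)
    (htel : ∀ i, 2 ≤ i → i ≤ m → a i / seqGcd a i ∈ seqSemigroup a (i - 1))
    (hne : seqSemigroup a m ≠ ⊤) :
    ∃ l : ℕ, IsGreatest {x : ℕ | x ∉ seqSemigroup a m} l ∧
      (l : ℤ) = ∑ i ∈ Finset.Icc 1 m,
        ((seqGcd a (i - 1) : ℤ) / (seqGcd a i : ℤ) - 1) * (a i : ℤ) := by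
  obtain ⟨F, hF, hsum⟩ :=
    exists_isFrobeniusNumber_seqSemigroup (hpos 1 le_rfl hm) htel hm le_rfl
  rw [hgcd, Nat.cast_one, one_mul] at hsum
  obtain ⟨l, hl, rfl⟩ := hF.exists_isGreatest hne
  exact ⟨l, hl, hsum⟩
end

section
/- Let q be a power of a prime p, let n ≥ 2, let r be an integer with ⌈n/2⌉ ≤ r ≤ n-1, let 1 ≤ s ≤ n, and let g_s(y) = y^{q^s} + a_{s-1} y^{q^{s-1}} + ... + a_0 y ∈ F_{q^n}[y] with a_0 ≠ 0. Let K be an algebraic closure of F_q and let α ∈ K satisfy R_s(α) = 0, where R_s(x) = (a_0 x)^{q^s} + (a_1 x)^{q^{s-1}} + ... + (a_{s-1} x)^q + x. Then there exists a polynomial z ∈ K[x,y] such that z^q - z = α^{q^n} g_s(y) + α^{q^n} x^{q^{n}+q^{n-r}} - α^{q^r} x^{q^r+1}. -/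
open MvPolynomial

lemma telesc {R : Type*} [CommRing R] (p : ℕ) [ExpChar R p] (e : ℕ) (w : R) (m : ℕ) :
    (∑ k ∈ Finset.range m, w ^ (p ^ e) ^ k) ^ (p ^ e) - (∑ k ∈ Finset.range m, w ^ (p ^ e) ^ k)
      = w ^ (p ^ e) ^ m - w := by
  rw [sum_pow_char_pow, ← Finset.sum_sub_distrib]
  have : ∀ k, (w ^ (p ^ e) ^ k) ^ p ^ e - w ^ (p ^ e) ^ k
      = w ^ (p ^ e) ^ (k + 1) - w ^ (p ^ e) ^ k := by
    intro k; rw [← pow_mul, ← pow_succ]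
  simp_rw [this]
  rw [Finset.sum_range_sub (fun k => w ^ (p ^ e) ^ k)]
  simp


/-- Part of the proof of Theorem 3.1: for `α ∈ K` with `R_s(α) = 0` there is a bivariate
polynomial `z ∈ K[x,y]` with
`z^q - z = α^{q^n}·g_s(y) + α^{q^n}·x^{q^n+q^{n-r}} - α^{q^r}·x^{q^r+1}`.
Here `X 0` plays the role of `x` and `X 1` the role of `y`. -/
theorem exists_z_artin_schreier_on_subcover
    (p q e n r s : ℕ) (hp : p.Prime) (he : 0 < e) (hq : q = p ^ e)
    (hn : 2 ≤ n) (hr1 : n ≤ 2 * r) (hr2 : r ≤ n - 1)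
    (hs1 : 1 ≤ s) (hs2 : s ≤ n)
    (F : Type*) [Field F] [Fintype F] (hF : Fintype.card F = q ^ n)
    (K : Type*) [Field K] [Algebra F K] [IsAlgClosure F K]
    (a : ℕ → F) (ha : a 0 ≠ 0)
    (α : K)
    (hα : (∑ i ∈ Finset.range s, (algebraMap F K (a i) * α) ^ q ^ (s - i)) + α = 0) :
    ∃ z : MvPolynomial (Fin 2) K,
      z ^ q - z =
        C (α ^ q ^ n) *
          ((X 1) ^ q ^ s + ∑ i ∈ Finset.range s, C (algebraMap F K (a i)) * (X 1) ^ q ^ i)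
        + C (α ^ q ^ n) * (X 0) ^ (q ^ n + q ^ (n - r))
        - C (α ^ q ^ r) * (X 0) ^ (q ^ r + 1) := by
  subst hq
  -- characteristic facts
  haveI := Fact.mk hp
  haveI : CharP F p := by
    haveI : CharP F (ringChar F) := ringChar.charP F
    obtain ⟨m, hp', hFm⟩ := FiniteField.card F (ringChar F)
    have hpm : p ∣ ringChar F ^ (m : ℕ) := by
      rw [← hFm, hF, ← pow_mul]
      exact dvd_pow_self p (by positivity)
    have : p = ringChar F := by
      have := hp.dvd_of_dvd_pow hpm
      exact ((Nat.prime_dvd_prime_iff_eq hp hp').mp this)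
    exact this ▸ ringChar.charP F
  haveI : CharP K p := charP_of_injective_algebraMap (algebraMap F K).injective p
  haveI : ExpChar K p := ExpChar.prime hp
  haveI : CharP (MvPolynomial (Fin 2) K) p := inferInstance
  haveI : ExpChar (MvPolynomial (Fin 2) K) p := ExpChar.prime hp
  have hppos : 0 < p ^ e := pow_pos hp.pos e
  have hrn : r ≤ n := le_trans hr2 (Nat.sub_le n 1)
  -- key field identity from hα
  have hkey : α ^ (p ^ e) ^ (n - s)
      + ∑ i ∈ Finset.range s, (algebraMap F K (a i) * α) ^ (p ^ e) ^ (n - i) = 0 := by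
    have h0 : ((∑ i ∈ Finset.range s, (algebraMap F K (a i) * α) ^ (p ^ e) ^ (s - i)) + α)
        ^ (p ^ e) ^ (n - s) = 0 := by
      rw [hα]; exact zero_pow (by positivity)
    rw [← pow_mul, add_pow_char_pow, sum_pow_char_pow] at h0
    have hterm : ∀ i ∈ Finset.range s,
        ((algebraMap F K (a i) * α) ^ (p ^ e) ^ (s - i)) ^ p ^ (e * (n - s))
          = (algebraMap F K (a i) * α) ^ (p ^ e) ^ (n - i) := by
      intro i hi
      simp only [Finset.mem_range] at hi
      rw [pow_mul, ← pow_mul, ← pow_add]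
      congr 2
      omega
    rw [Finset.sum_congr rfl hterm, pow_mul] at h0
    linear_combination h0
  -- a i is fixed by q^n power
  have hai : ∀ i, (algebraMap F K (a i)) ^ (p ^ e) ^ n = algebraMap F K (a i) := by
    intro i
    rw [← map_pow, ← hF, FiniteField.pow_card]
  -- the three pieces
  set A : MvPolynomial (Fin 2) K :=
    ∑ k ∈ Finset.range (n - r), (C (α ^ (p ^ e) ^ r) * X 0 ^ ((p ^ e) ^ r + 1)) ^ (p ^ e) ^ k
    with hA
  set B : MvPolynomial (Fin 2) K :=
    ∑ k ∈ Finset.range s, (C (α ^ (p ^ e) ^ (n - s)) * X 1) ^ (p ^ e) ^ k with hB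
  set D : MvPolynomial (Fin 2) K :=
    ∑ i ∈ Finset.range s, ∑ k ∈ Finset.range i,
      (C ((algebraMap F K (a i) * α) ^ (p ^ e) ^ (n - i)) * X 1) ^ (p ^ e) ^ k with hD
  refine ⟨A + B + D, ?_⟩
  have hsplit : (A + B + D) ^ p ^ e - (A + B + D)
      = (A ^ p ^ e - A) + (B ^ p ^ e - B) + (D ^ p ^ e - D) := by
    rw [add_pow_char_pow, add_pow_char_pow]; ring
  rw [hsplit, hA, hB, hD, telesc p e _ (n - r), telesc p e _ s]
  rw [sum_pow_char_pow, ← Finset.sum_sub_distrib]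
  have hDsum : ∀ i ∈ Finset.range s,
      (∑ k ∈ Finset.range i, ((C ((algebraMap F K (a i) * α) ^ (p ^ e) ^ (n - i)) * X 1 :
          MvPolynomial (Fin 2) K))
        ^ (p ^ e) ^ k) ^ p ^ e
      - (∑ k ∈ Finset.range i, ((C ((algebraMap F K (a i) * α) ^ (p ^ e) ^ (n - i)) * X 1 :
          MvPolynomial (Fin 2) K))
        ^ (p ^ e) ^ k)
      = C (α ^ (p ^ e) ^ n) * (C (algebraMap F K (a i)) * X 1 ^ (p ^ e) ^ i)
        - C ((algebraMap F K (a i) * α) ^ (p ^ e) ^ (n - i)) * X 1 := by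
    intro i hi
    simp only [Finset.mem_range] at hi
    rw [telesc p e _ i]
    congr 1
    rw [mul_pow, ← C_pow, ← pow_mul, ← pow_add]
    have hni : (n - i) + i = n := by omega
    rw [hni, mul_pow, hai i, C_mul]
    ring
  rw [Finset.sum_congr rfl hDsum, Finset.sum_sub_distrib]
  -- compute the A head term
  have eA : (C (α ^ (p ^ e) ^ r) * X 0 ^ ((p ^ e) ^ r + 1) : MvPolynomial (Fin 2) K)
      ^ (p ^ e) ^ (n - r)
      = C (α ^ (p ^ e) ^ n) * X 0 ^ ((p ^ e) ^ n + (p ^ e) ^ (n - r)) := by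
    have h1 : r + (n - r) = n := by omega
    have h2 : ((p ^ e) ^ r + 1) * (p ^ e) ^ (n - r) = (p ^ e) ^ n + (p ^ e) ^ (n - r) := by
      rw [add_mul, one_mul, ← pow_add, h1]
    rw [mul_pow, ← C_pow, ← pow_mul α, ← pow_add, h1,
      ← pow_mul (X 0 : MvPolynomial (Fin 2) K), h2]
  have eB : (C (α ^ (p ^ e) ^ (n - s)) * X 1 : MvPolynomial (Fin 2) K) ^ (p ^ e) ^ s
      = C (α ^ (p ^ e) ^ n) * X 1 ^ (p ^ e) ^ s := by
    have h3 : (n - s) + s = n := by omega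
    rw [mul_pow, ← C_pow, ← pow_mul α, ← pow_add, h3]
  rw [eA, eB]
  -- the linear-in-X1 parts cancel using hkey
  have hcancel : (C (α ^ (p ^ e) ^ (n - s)) * X 1 : MvPolynomial (Fin 2) K)
      + ∑ i ∈ Finset.range s, C ((algebraMap F K (a i) * α) ^ (p ^ e) ^ (n - i)) * X 1 = 0 := by
    rw [← Finset.sum_mul, ← add_mul, ← map_sum, ← C_add, hkey, map_zero, zero_mul]
  rw [mul_add, Finset.mul_sum]
  linear_combination -hcancel
end

section
/- Let q be a power of a prime p, let n ≥ 2, let r be an integer with ⌈n/2⌉ ≤ r ≤ n-1 and gcd(n,r) = 1, let s ≥ 1, and let g_s(y) ∈ F_{q^n}[y] be a separable q-polynomial of degree q^s that splits into linear factors over F_{q^n}. Let Q(y), U(y) ∈ F_{q^n}[y] be nonzero q-polynomials with deg(U) ≤ q^{n-r-1} satisfying Q(y)^{q^{n-r}} = y + U(g_s(y)). Then: (a) there exists a unique polynomial h(x) ∈ F_{q^n}[x] with h(x)^{q^{n-r}} = U(x^{q^{n}+q^{n-r}}); and (b) setting Z := Q(y) - h(x) ∈ F_{q^n}[x,y], the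 congruence Z^{q^{n-r}} ≡ y - U(x^{q^{n-r}+1}) holds modulo the ideal of F_{q^n}[x,y] generated by g_s(y) - x^{q^{n}+q^{n-r}} + x^{q^{n-r}+1}. -/
/-!
Everything follows from the Frobenius `f ↦ f ^ p ^ m` being an injective ring endomorphism in
characteristic `p`, together with the fact that a `p ^ e`-polynomial `U` is additive and divisible
by its argument. For (a), when `p ^ m ∣ A` the polynomial `U(x ^ A)` is the `p ^ m`-th power of
`U(x ^ (A / p ^ m))` with its coefficients replaced by their `p ^ m`-th roots, which exist since
`F` is perfect. For (b), raising `Q(y) - h(x)` to the power `q ^ (n - r)` and substituting the two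
defining equations leaves `U(g_s(y)) - U(x ^ (q^n + q^(n-r))) + U(x ^ (q^(n-r) + 1))`, which by
additivity is `U(G)` for the curve equation `G`, hence a multiple of `G`.
-/

open Polynomial

namespace IsqPoly

variable {F R : Type*} [CommSemiring F] {p e : ℕ} {f : F[X]}

theorem aeval_add [CommSemiring R] [Algebra F R] [ExpChar R p] (hf : IsqPoly (p ^ e) f)
    (a b : R) : aeval (a + b) f = aeval a f + aeval b f := by
  simp only [aeval_def, eval₂_eq_sum, Polynomial.sum_def, ← Finset.sum_add_distrib]
  refine Finset.sum_congr rfl fun i hi => ?_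
  obtain ⟨k, rfl⟩ := hf i hi
  rw [← pow_mul, add_pow_expChar_pow, mul_add]

theorem aeval_sub [CommRing R] [Algebra F R] [ExpChar R p] (hf : IsqPoly (p ^ e) f)
    (a b : R) : aeval (a - b) f = aeval a f - aeval b f := by
  simp only [aeval_def, eval₂_eq_sum, Polynomial.sum_def, ← Finset.sum_sub_distrib]
  refine Finset.sum_congr rfl fun i hi => ?_
  obtain ⟨k, rfl⟩ := hf i hi
  rw [← pow_mul, sub_pow_expChar_pow, mul_sub]

theorem dvd_aeval [CommSemiring R] [Algebra F R] {q : ℕ} (hq : q ≠ 0) (hf : IsqPoly q f)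
    (a : R) : a ∣ aeval a f := by
  simp only [aeval_def, eval₂_eq_sum, Polynomial.sum_def]
  refine Finset.dvd_sum fun i hi => ?_
  obtain ⟨k, rfl⟩ := hf i hi
  exact (dvd_pow_self a (pow_ne_zero k hq)).mul_left _

theorem sub_dvd_aeval_sub [CommRing R] [Algebra F R] [ExpChar R p] (hf : IsqPoly (p ^ e) f)
    (a b : R) : a - b ∣ aeval a f - aeval b f :=
  hf.aeval_sub a b ▸ hf.dvd_aeval (pow_ne_zero e (expChar_pos R p).ne') (a - b)

theorem sub_sub_dvd_frobenius_sub [CommRing R] [Algebra F R] [ExpChar R p]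
    (hf : IsqPoly (p ^ e) f) {m : ℕ} {y z w a b c : R}
    (hz : z ^ p ^ m = y + aeval a f) (hw : w ^ p ^ m = aeval b f) :
    a - (b - c) ∣ (z - w) ^ p ^ m - (y - aeval c f) := by
  have hexpand : (z - w) ^ p ^ m - (y - aeval c f) = aeval a f - (aeval b f - aeval c f) := by
    rw [sub_pow_expChar_pow, hz, hw]
    ring
  rw [hexpand, ← hf.aeval_sub]
  exact hf.sub_dvd_aeval_sub a (b - c)

end IsqPoly

theorem Polynomial.exists_pow_expChar_pow_eq_expand {F : Type*} [CommRing F] {p : ℕ}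
    [ExpChar F p] [PerfectRing F p] (m : ℕ) {A : ℕ} (hA : p ^ m ∣ A) (U : F[X]) :
    ∃ h : F[X], h ^ p ^ m = expand F A U := by
  obtain ⟨B, rfl⟩ := hA
  refine ⟨map (iterateFrobeniusEquiv F p m).symm.toRingHom (expand F B U), ?_⟩
  have hcancel : (iterateFrobenius F p m).comp (iterateFrobeniusEquiv F p m).symm.toRingHom =
      RingHom.id F :=
    RingHom.ext (iterateFrobeniusEquiv F p m).apply_symm_apply
  rw [← map_iterateFrobenius_expand, map_expand, map_map, hcancel, Polynomial.map_id, expand_mul]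

theorem Z_pow_congruence_on_subcover_general
    (p q e n r : ℕ) (hp : p.Prime) (hq : q = p ^ e)
    (F : Type*) [Field F] [Fintype F] (hF : Fintype.card F = q ^ n)
    (gs : Polynomial F)
    (Q U : Polynomial F)
    (hUq : IsqPoly q U)
    (heq : Q ^ q ^ (n - r) = X + U.comp gs) :
    (∃! h : Polynomial F, h ^ q ^ (n - r) = U.comp (X ^ (q ^ n + q ^ (n - r)))) ∧
    (∀ h : Polynomial F, h ^ q ^ (n - r) = U.comp (X ^ (q ^ n + q ^ (n - r))) →
      (Polynomial.aeval (MvPolynomial.X 1 : MvPolynomial (Fin 2) F) Q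
          - Polynomial.aeval (MvPolynomial.X 0 : MvPolynomial (Fin 2) F) h) ^ q ^ (n - r)
        - (MvPolynomial.X 1
            - Polynomial.aeval ((MvPolynomial.X 0 : MvPolynomial (Fin 2) F) ^ (q ^ (n - r) + 1)) U)
        ∈ Ideal.span {Polynomial.aeval (MvPolynomial.X 1 : MvPolynomial (Fin 2) F) gs
            - (MvPolynomial.X 0 : MvPolynomial (Fin 2) F) ^ (q ^ n + q ^ (n - r))
            + (MvPolynomial.X 0 : MvPolynomial (Fin 2) F) ^ (q ^ (n - r) + 1)}) := by
  subst hq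
  have : Fact p.Prime := ⟨hp⟩
  have : CharP F p := charP_of_card_eq_prime_pow (hF.trans (pow_mul p e n).symm)
  simp only [← pow_mul] at heq ⊢
  refine ⟨?_, fun h hh => ?_⟩
  · have hdvd : p ^ (e * (n - r)) ∣ p ^ (e * n) + p ^ (e * (n - r)) :=
      dvd_add (pow_dvd_pow p (Nat.mul_le_mul_left e (Nat.sub_le n r))) dvd_rfl
    obtain ⟨h, hh⟩ := exists_pow_expChar_pow_eq_expand _ hdvd U
    exact ⟨h, hh, fun h' hh' => iterateFrobenius_inj F[X] p _ (hh'.trans hh.symm)⟩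
  · rw [Ideal.mem_span_singleton, sub_add]
    exact hUq.sub_sub_dvd_frobenius_sub (by rw [← map_pow, heq, map_add, aeval_X, aeval_comp])
      (by rw [← map_pow, hh, aeval_comp, map_pow, aeval_X])

/-- First part of the proof of Theorem 3.3 (`teo Z`): (a) there is a unique `h` with
`h(x)^{q^{n-r}} = U(x^{q^n+q^{n-r}})`, and (b) for `Z := Q(y) - h(x)` one has
`Z^{q^{n-r}} ≡ y - U(x^{q^{n-r}+1})` modulo the curve `g_s(y) = x^{q^n+q^{n-r}} - x^{q^{n-r}+1}`.
Here `X 0` plays the role of `x` and `X 1` the role of `y` in `F_{q^n}[x,y]`. -/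
theorem Z_pow_congruence_on_subcover
    (p q e n r s : ℕ) (hp : p.Prime) (he : 0 < e) (hq : q = p ^ e)
    (hn : 2 ≤ n) (hr1 : n ≤ 2 * r) (hr2 : r ≤ n - 1) (hgcd : Nat.gcd n r = 1)
    (hs : 1 ≤ s)
    (F : Type*) [Field F] [Fintype F] (hF : Fintype.card F = q ^ n)
    (gs : Polynomial F)
    (hgs_q : IsqPoly q gs) (hgs_deg : gs.natDegree = q ^ s)
    (hgs_sep : gs.coeff 1 ≠ 0) (hgs_split : Splits (gs.map (RingHom.id F)))
    (Q U : Polynomial F) (hQ0 : Q ≠ 0) (hU0 : U ≠ 0)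
    (hQq : IsqPoly q Q) (hUq : IsqPoly q U)
    (hUdeg : U.natDegree ≤ q ^ (n - r - 1))
    (heq : Q ^ q ^ (n - r) = X + U.comp gs) :
    (∃! h : Polynomial F, h ^ q ^ (n - r) = U.comp (X ^ (q ^ n + q ^ (n - r)))) ∧
    (∀ h : Polynomial F, h ^ q ^ (n - r) = U.comp (X ^ (q ^ n + q ^ (n - r))) →
      (Polynomial.aeval (MvPolynomial.X 1 : MvPolynomial (Fin 2) F) Q
          - Polynomial.aeval (MvPolynomial.X 0 : MvPolynomial (Fin 2) F) h) ^ q ^ (n - r)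
        - (MvPolynomial.X 1
            - Polynomial.aeval ((MvPolynomial.X 0 : MvPolynomial (Fin 2) F) ^ (q ^ (n - r) + 1)) U)
        ∈ Ideal.span {Polynomial.aeval (MvPolynomial.X 1 : MvPolynomial (Fin 2) F) gs
            - (MvPolynomial.X 0 : MvPolynomial (Fin 2) F) ^ (q ^ n + q ^ (n - r))
            + (MvPolynomial.X 0 : MvPolynomial (Fin 2) F) ^ (q ^ (n - r) + 1)}) :=
  Z_pow_congruence_on_subcover_general p q e n r hp hq F hF gs Q U hUq heq
end

section
/- Let q be a power of a prime p, let n ≥ 2, let r be an integer with ⌈n/2⌉ ≤ r ≤ n-1 and gcd(n,r) = 1, and let g_s(y) ∈ F_{q^n}[y] be a separable q-polynomial of degree q^s that splits into linear factors over F_{q^n}. Let Q(y), U(y) ∈ F_{q^n}[y] be nonzero q-polynomials with Q(y)^{q^{n-r}} = y + U(g_s(y)) and deg(U) = q^{n-r-1}, let a_u ∈ F_{q^n} be the leading coefficient of U, and set U_2(x) := U(x) - a_u x^{q^{n-r-1}}. Let h(x) ∈ F_{q^n}[x] be the unique polynomial with h(x)^{q^{n-r}} = U(x^{q^{n}+q^{n-r}}),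 set Z := Q(y) - h(x), let b ∈ F_{q^n} be the unique element with b^{q^{n-r-1}} = a_u, and define W := Z^q + b·x^{q^{n-r}+1} ∈ F_{q^n}[x,y]. Then the congruence W^{q^{n-r-1}} ≡ y - U_2(x^{q^{n-r}+1}) holds modulo the ideal of F_{q^n}[x,y] generated by g_s(y) - x^{q^{n}+q^{n-r}} + x^{q^{n-r}+1}. -/
/-! Everything is Frobenius. With `A = x^{q^n+q^{n-r}}` and `B = x^{q^{n-r}+1}`, raising
`W = Z^q + b B` to the `q^{n-r-1}` gives `Q(y)^{q^{n-r}} - h(x)^{q^{n-r}} + a_u B^{q^{n-r-1}}`,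
that is `y + U(g_s(y)) - U(A) + a_u B^{q^{n-r-1}}`. The `q`-polynomial `U` is additive, so
`U(A) = U(A - B) + U(B)`, and `U(g_s(y)) ≡ U(A - B)` since `g_s(y) ≡ A - B` modulo the curve.
In `MvPolynomial (Fin 2) F`, `X 0` is `x` and `X 1` is `y`. -/

open Polynomial

section

variable {F R : Type*}

theorem add_pow_pow_expChar_pow [CommSemiring R] {p : ℕ} [ExpChar R p] (a b : R) (e k : ℕ) :
    (a + b) ^ (p ^ e) ^ k = a ^ (p ^ e) ^ k + b ^ (p ^ e) ^ k := by
  rw [← pow_mul]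
  exact add_pow_expChar_pow a b p _

theorem sub_pow_pow_expChar_pow [CommRing R] {p : ℕ} [ExpChar R p] (a b : R) (e k : ℕ) :
    (a - b) ^ (p ^ e) ^ k = a ^ (p ^ e) ^ k - b ^ (p ^ e) ^ k := by
  rw [← pow_mul]
  exact sub_pow_expChar_pow a b _

theorem IsqPoly.aeval_add_s16 [CommSemiring F] [CommSemiring R] [Algebra F R] {p e : ℕ} [ExpChar R p]
    {f : F[X]} (hf : IsqPoly (p ^ e) f) (a b : R) :
    aeval (a + b) f = aeval a f + aeval b f := by
  simp only [aeval_def, eval₂_eq_sum, Polynomial.sum_def, ← Finset.sum_add_distrib]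
  refine Finset.sum_congr rfl fun i hi => ?_
  obtain ⟨k, rfl⟩ := hf i hi
  rw [add_pow_pow_expChar_pow, mul_add]

theorem Polynomial.sub_dvd_aeval_sub [CommRing F] [CommRing R] [Algebra F R] (a b : R)
    (f : F[X]) : a - b ∣ aeval a f - aeval b f := by
  simpa only [aeval_def, eval₂_eq_eval_map] using sub_dvd_eval_sub a b (f.map (algebraMap F R))

theorem aeval_sub_leadingCoeff_mul_X_pow [CommRing F] [CommRing R] [Algebra F R] (a : R)
    (f : F[X]) (d : ℕ) :
    aeval a (f - C f.leadingCoeff * X ^ d)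
      = aeval a f - algebraMap F R f.leadingCoeff * a ^ d := by
  simp only [map_sub, map_mul, aeval_C, map_pow, aeval_X]

end

theorem W_pow_congruence_on_subcover_general
    (p q e n r : ℕ) (hp : p.Prime) (hq : q = p ^ e)
    (hn : 2 ≤ n) (hr2 : r ≤ n - 1)
    (F : Type*) [Field F] [Fintype F] (hF : Fintype.card F = q ^ n)
    (gs : Polynomial F)
    (Q U : Polynomial F)
    (hUq : IsqPoly q U)
    (heq : Q ^ q ^ (n - r) = X + U.comp gs)
    (h : Polynomial F)
    (hh : h ^ q ^ (n - r) = U.comp (X ^ (q ^ n + q ^ (n - r))))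
    (b : F) (hb : b ^ q ^ (n - r - 1) = U.leadingCoeff) :
    ((Polynomial.aeval (MvPolynomial.X 1 : MvPolynomial (Fin 2) F) Q
        - Polynomial.aeval (MvPolynomial.X 0 : MvPolynomial (Fin 2) F) h) ^ q
      + MvPolynomial.C b * (MvPolynomial.X 0 : MvPolynomial (Fin 2) F) ^ (q ^ (n - r) + 1))
        ^ q ^ (n - r - 1)
      - (MvPolynomial.X 1
          - Polynomial.aeval ((MvPolynomial.X 0 : MvPolynomial (Fin 2) F) ^ (q ^ (n - r) + 1))
              (U - C U.leadingCoeff * X ^ q ^ (n - r - 1)))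
      ∈ Ideal.span {Polynomial.aeval (MvPolynomial.X 1 : MvPolynomial (Fin 2) F) gs
          - (MvPolynomial.X 0 : MvPolynomial (Fin 2) F) ^ (q ^ n + q ^ (n - r))
          + (MvPolynomial.X 0 : MvPolynomial (Fin 2) F) ^ (q ^ (n - r) + 1)} := by
  subst hq
  have := Fact.mk hp
  have : CharP F p := charP_of_card_eq_prime_pow (hF.trans (pow_mul p e n).symm)
  set x : MvPolynomial (Fin 2) F := MvPolynomial.X 0
  set y : MvPolynomial (Fin 2) F := MvPolynomial.X 1
  set A := x ^ ((p ^ e) ^ n + (p ^ e) ^ (n - r))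
  set B := x ^ ((p ^ e) ^ (n - r) + 1)
  have hfrob : ((aeval y Q - aeval x h) ^ p ^ e + MvPolynomial.C b * B) ^ (p ^ e) ^ (n - r - 1)
      = y + aeval (aeval y gs) U - aeval A U
        + MvPolynomial.C U.leadingCoeff * B ^ (p ^ e) ^ (n - r - 1) := by
    have hnr : (p ^ e) ^ (n - r) = p ^ e * (p ^ e) ^ (n - r - 1) := by
      rw [← pow_succ']; congr 1; omega
    rw [add_pow_pow_expChar_pow, ← pow_mul, ← hnr, sub_pow_pow_expChar_pow, ← map_pow,
      ← map_pow, heq, hh, mul_pow, ← map_pow, hb]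
    simp only [map_add, aeval_X, aeval_comp, map_pow]
    ring
  have hadd := hUq.aeval_add_s16 (A - B) B
  rw [sub_add_cancel] at hadd
  obtain ⟨d, hd⟩ := sub_dvd_aeval_sub (aeval y gs) (A - B) U
  rw [Ideal.mem_span_singleton, aeval_sub_leadingCoeff_mul_X_pow]
  exact ⟨d, by rw [MvPolynomial.algebraMap_eq]; linear_combination hfrob - hadd + hd⟩

/-- Part of the proof of Theorem 3.4 (`Teo HP`): with `U = a_u·x^{q^{n-r-1}} + U_2(x)`,
`Z := Q(y) - h(x)` and `W := Z^q + b·x^{q^{n-r}+1}` (where `b^{q^{n-r-1}} = a_u`), the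
congruence `W^{q^{n-r-1}} ≡ y - U_2(x^{q^{n-r}+1})` holds modulo the curve
`g_s(y) = x^{q^n+q^{n-r}} - x^{q^{n-r}+1}`. Here `X 0` is `x` and `X 1` is `y`. -/
theorem W_pow_congruence_on_subcover
    (p q e n r s : ℕ) (hp : p.Prime) (he : 0 < e) (hq : q = p ^ e)
    (hn : 2 ≤ n) (hr1 : n ≤ 2 * r) (hr2 : r ≤ n - 1) (hgcd : Nat.gcd n r = 1)
    (hs : 1 ≤ s)
    (F : Type*) [Field F] [Fintype F] (hF : Fintype.card F = q ^ n)
    (gs : Polynomial F)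
    (hgs_q : IsqPoly q gs) (hgs_deg : gs.natDegree = q ^ s)
    (hgs_sep : gs.coeff 1 ≠ 0) (hgs_split : Splits (gs.map (RingHom.id F)))
    (Q U : Polynomial F) (hQ0 : Q ≠ 0) (hU0 : U ≠ 0)
    (hQq : IsqPoly q Q) (hUq : IsqPoly q U)
    (hUdeg : U.natDegree = q ^ (n - r - 1))
    (heq : Q ^ q ^ (n - r) = X + U.comp gs)
    (h : Polynomial F)
    (hh : h ^ q ^ (n - r) = U.comp (X ^ (q ^ n + q ^ (n - r))))
    (b : F) (hb : b ^ q ^ (n - r - 1) = U.leadingCoeff) :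
    ((Polynomial.aeval (MvPolynomial.X 1 : MvPolynomial (Fin 2) F) Q
        - Polynomial.aeval (MvPolynomial.X 0 : MvPolynomial (Fin 2) F) h) ^ q
      + MvPolynomial.C b * (MvPolynomial.X 0 : MvPolynomial (Fin 2) F) ^ (q ^ (n - r) + 1))
        ^ q ^ (n - r - 1)
      - (MvPolynomial.X 1
          - Polynomial.aeval ((MvPolynomial.X 0 : MvPolynomial (Fin 2) F) ^ (q ^ (n - r) + 1))
              (U - C U.leadingCoeff * X ^ q ^ (n - r - 1)))
      ∈ Ideal.span {Polynomial.aeval (MvPolynomial.X 1 : MvPolynomial (Fin 2) F) gs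
          - (MvPolynomial.X 0 : MvPolynomial (Fin 2) F) ^ (q ^ n + q ^ (n - r))
          + (MvPolynomial.X 0 : MvPolynomial (Fin 2) F) ^ (q ^ (n - r) + 1)} :=
  W_pow_congruence_on_subcover_general p q e n r hp hq hn hr2 F hF gs Q U hUq heq h hh b hb
end
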